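/- arXiv:1602.00727 — 11 statements merged into one kernel-verified Lean document; each statement's English description precedes it below -/
import Mathlib

section
/- Let t ∈ (0,1) be fixed. For q ∈ ℝ and y ∈ ℝ define f_q(y) = ∏_{k=1}^∞ 1/(1 + t^{qy + k}). Then f_q(y) is increasing in y for every q > 0 and decreasing in y for every q < 0; moreover, for each δ > 0, f_q(y) converges to the indicator function 1_{y > 0} uniformly on ℝ \ [−δ, δ] as q → ∞. -/
open Filter Set Topology

/-!
With `F x = ∏_{k ≥ 1} 1 / (1 + t ^ (x + k))` we have `f_q y = F (q * y)`. Every factor of `F`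
increases with `x`, so `F` is monotone. It tends to `0` at `-∞` because it is bounded by its first
factor, and to `1` at `+∞` because `1 - ∑ a_k ≤ exp (-∑ a_k) ≤ ∏ 1 / (1 + a_k)`. For `q > 0` and
`|y| > δ`, monotonicity bounds the distance of `F (q * y)` from `1_{y > 0}` by `F (-q * δ)` or
`1 - F (q * δ)`, which is uniform in `y`.
-/

theorem hasProd_le_of_nonneg {ι : Type*} {f g : ι → ℝ} {a b : ℝ} (hf0 : ∀ i, 0 ≤ f i)
    (hfg : ∀ i, f i ≤ g i) (hf : HasProd f a) (hg : HasProd g b) : a ≤ b :=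
  le_of_tendsto_of_tendsto' hf hg fun _ =>
    Finset.prod_le_prod (fun i _ => hf0 i) fun i _ => hfg i

section OneDivOneAdd

variable {ι : Type*} {a : ι → ℝ}

theorem multipliable_one_div_one_add (ha0 : ∀ i, 0 ≤ a i) (ha : Summable a) :
    Multipliable fun i => 1 / (1 + a i) := by
  have hne : ∏' i, (1 + a i) ≠ 0 :=
    tprod_one_add_ne_zero_of_summable (fun i => by linarith [ha0 i])
      (ha.congr fun i => (Real.norm_of_nonneg (ha0 i)).symm)
  simpa only [one_div] using (Real.multipliable_one_add_of_summable ha).inv₀ hne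

theorem tprod_one_div_one_add_le (ha0 : ∀ i, 0 ≤ a i) (ha : Summable a) (i : ι) :
    ∏' j, 1 / (1 + a j) ≤ 1 / (1 + a i) := by
  classical
  refine hasProd_le_of_nonneg (fun j => by have := ha0 j; positivity) (fun j => ?_)
    (multipliable_one_div_one_add ha0 ha).hasProd (hasProd_pi_single i (1 / (1 + a i)))
  rcases eq_or_ne j i with rfl | hji
  · simp
  · rw [Pi.mulSingle_eq_of_ne hji, div_le_one (by linarith [ha0 j])]
    linarith [ha0 j]

theorem one_sub_tsum_le_tprod_one_div_one_add (ha0 : ∀ i, 0 ≤ a i) (ha : Summable a) :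
    1 - ∑' i, a i ≤ ∏' i, 1 / (1 + a i) :=
  calc 1 - ∑' i, a i ≤ Real.exp (-∑' i, a i) := by linarith [Real.add_one_le_exp (-∑' i, a i)]
    _ ≤ ∏' i, 1 / (1 + a i) := by
      refine hasProd_le_of_nonneg (fun i => (Real.exp_pos _).le) (fun i => ?_)
        ha.hasSum.neg.rexp (multipliable_one_div_one_add ha0 ha).hasProd
      rw [Real.exp_neg, ← one_div]
      exact one_div_le_one_div_of_le (by linarith [ha0 i]) (by linarith [Real.add_one_le_exp (a i)])

end OneDivOneAdd

/-- `pochInv t x = 1 / (-t ^ (x + 1); t)_∞`, so that `f_q y = pochInv t (q * y)`. -/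
noncomputable def pochInv (t x : ℝ) : ℝ :=
  ∏' k : ℕ, 1 / (1 + t ^ (x + (k + 1 : ℝ)))

section PochInv

variable {t : ℝ}

theorem hasSum_rpow_add_succ (ht0 : 0 < t) (ht1 : t < 1) (x : ℝ) :
    HasSum (fun k : ℕ => t ^ (x + (k + 1 : ℝ))) (t ^ (x + 1) / (1 - t)) := by
  have hterm : (fun k : ℕ => t ^ (x + (k + 1 : ℝ))) = fun k : ℕ => t ^ (x + 1) * t ^ k := by
    funext k
    rw [← Real.rpow_natCast, ← Real.rpow_add ht0]
    ring_nf
  rw [hterm, div_eq_mul_inv]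
  exact (hasSum_geometric_of_lt_one ht0.le ht1).mul_left (t ^ (x + 1))

theorem multipliable_pochInv (ht0 : 0 < t) (ht1 : t < 1) (x : ℝ) :
    Multipliable fun k : ℕ => 1 / (1 + t ^ (x + (k + 1 : ℝ))) :=
  multipliable_one_div_one_add (fun _ => by positivity) (hasSum_rpow_add_succ ht0 ht1 x).summable

theorem pochInv_monotone (ht0 : 0 < t) (ht1 : t < 1) : Monotone (pochInv t) := by
  intro x y hxy
  refine hasProd_le_of_nonneg (fun _ => by positivity) (fun k => ?_)
    (multipliable_pochInv ht0 ht1 x).hasProd (multipliable_pochInv ht0 ht1 y).hasProd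
  have hpow : t ^ (y + (k + 1 : ℝ)) ≤ t ^ (x + (k + 1 : ℝ)) :=
    Real.rpow_le_rpow_of_exponent_ge ht0 ht1.le (by linarith)
  exact one_div_le_one_div_of_le (by positivity) (by linarith)

theorem tendsto_pochInv_atBot (ht0 : 0 < t) (ht1 : t < 1) :
    Tendsto (pochInv t) atBot (𝓝 0) := by
  have hfirst : Tendsto (fun x : ℝ => 1 / (1 + t ^ (x + 1))) atBot (𝓝 0) := by
    simp only [one_div]
    exact tendsto_inv_atTop_zero.comp <| tendsto_atTop_add_const_left _ 1 <|
      (tendsto_rpow_atBot_of_base_lt_one t ht0 ht1).comp (tendsto_atBot_add_const_right _ 1 tendsto_id)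
  refine tendsto_of_tendsto_of_tendsto_of_le_of_le tendsto_const_nhds hfirst
    (fun x => tprod_nonneg fun _ => by positivity) (fun x => ?_)
  simpa [pochInv] using tprod_one_div_one_add_le (fun _ => by positivity)
    (hasSum_rpow_add_succ ht0 ht1 x).summable 0

theorem tendsto_pochInv_atTop (ht0 : 0 < t) (ht1 : t < 1) :
    Tendsto (pochInv t) atTop (𝓝 1) := by
  have hlower : Tendsto (fun x : ℝ => 1 - t ^ (x + 1) / (1 - t)) atTop (𝓝 1) := by
    simpa using tendsto_const_nhds.sub <| (((tendsto_rpow_atTop_of_base_lt_one t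
      (by linarith) ht1).comp (tendsto_atTop_add_const_right _ 1 tendsto_id)).div_const (1 - t))
  refine tendsto_of_tendsto_of_tendsto_of_le_of_le hlower tendsto_const_nhds (fun x => ?_)
    (fun x => ?_)
  · rw [← (hasSum_rpow_add_succ ht0 ht1 x).tsum_eq]
    exact one_sub_tsum_le_tprod_one_div_one_add (fun _ => by positivity)
      (hasSum_rpow_add_succ ht0 ht1 x).summable
  · refine (tprod_one_div_one_add_le (fun _ => by positivity)
      (hasSum_rpow_add_succ ht0 ht1 x).summable 0).trans ?_
    rw [div_le_one (by positivity), le_add_iff_nonneg_right]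
    positivity

end PochInv

theorem Monotone.tendstoUniformlyOn_comp_mul_compl_Icc {F : ℝ → ℝ} (hF : Monotone F)
    (hbot : Tendsto F atBot (𝓝 0)) (htop : Tendsto F atTop (𝓝 1)) {δ : ℝ} (hδ : 0 < δ) :
    TendstoUniformlyOn (fun q y => F (q * y)) (fun y => if 0 < y then 1 else 0) atTop
      (Icc (-δ) δ)ᶜ := by
  rw [Metric.tendstoUniformlyOn_iff]
  intro ε hε
  have hright : ∀ᶠ q in atTop, 1 - ε < F (q * δ) :=
    (htop.comp (tendsto_id.atTop_mul_const hδ)).eventually_const_lt (by linarith)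
  have hleft : ∀ᶠ q in atTop, F (q * -δ) < ε :=
    (hbot.comp (tendsto_id.atTop_mul_const_of_neg (neg_neg_of_pos hδ))).eventually_lt_const hε
  filter_upwards [hright, hleft, eventually_gt_atTop 0] with q hqright hqleft hq y hy
  rw [mem_compl_iff, mem_Icc, not_and_or, not_le, not_le] at hy
  rw [Real.dist_eq, abs_sub_lt_iff]
  rcases hy with hy | hy
  · have hFy : F (q * y) ≤ F (q * -δ) := hF (by nlinarith)
    have hF0 : 0 ≤ F (q * y) := hF.le_of_tendsto hbot _
    rw [if_neg (by linarith)]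
    constructor <;> linarith
  · have hFy : F (q * δ) ≤ F (q * y) := hF (by nlinarith)
    have hF1 : F (q * y) ≤ 1 := hF.ge_of_tendsto htop _
    rw [if_pos (by linarith)]
    constructor <;> linarith

theorem stmt_0 (t : ℝ) (ht : t ∈ Set.Ioo (0:ℝ) 1)
    (f : ℝ → ℝ → ℝ)
    (hf : ∀ q y : ℝ, f q y = ∏' k : ℕ, 1 / (1 + t ^ (q * y + (k + 1 : ℝ)))) :
    (∀ q : ℝ, 0 < q → Monotone (f q)) ∧
    (∀ q : ℝ, q < 0 → Antitone (f q)) ∧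
    (∀ δ : ℝ, 0 < δ →
      TendstoUniformlyOn (fun q y => f q y)
        (fun y => if 0 < y then 1 else 0) atTop ((Set.Icc (-δ) δ)ᶜ)) := by
  obtain ⟨ht0, ht1⟩ := ht
  obtain rfl : f = fun q y => pochInv t (q * y) := funext₂ hf
  have hF : Monotone (pochInv t) := pochInv_monotone ht0 ht1
  exact ⟨fun q hq y₁ y₂ hy => hF (mul_le_mul_of_nonneg_left hy hq.le),
    fun q hq y₁ y₂ hy => hF (mul_le_mul_of_nonpos_left hy hq.le),
    fun δ hδ => hF.tendstoUniformlyOn_comp_mul_compl_Icc (tendsto_pochInv_atBot ht0 ht1)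
      (tendsto_pochInv_atTop ht0 ht1) hδ⟩
end

section
/- For t ∈ (0,1) and x ≥ 0 define g_t(x) = ∏_{k=1}^∞ 1/(1 + (1−t) x t^k). Then g_t(x) → e^{−x} uniformly on [0,∞) as t → 1⁻. -/
/-!
Writing `u k = (1 - t) x t^(k+1)`, we have `∑ u k = t x` and `g_t(x) = exp (-∑ log (1 + u k))`.
The bounds `u / (1 + u) ≤ log (1 + u) ≤ u`, together with `u k ≤ (1 - t) x`, give
`exp (-x) ≤ exp (-t x) ≤ g_t(x) ≤ exp (-t x / (1 + (1 - t) x))`.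
On `[0, M]` the two ends differ by at most `(1 - t) M (M + 1)`, while for `x ≥ M` the upper end is
at most its value at `x = M`, which tends to `exp (-M)` as `t → 1`.
-/

open Filter Set Real Topology

section LogSum

variable {ι : Type*} {u : ι → ℝ}

lemma tprod_one_div_one_add_eq_exp (hu : ∀ i, 0 ≤ u i) (hsum : Summable u) :
    ∏' i, 1 / (1 + u i) = exp (-∑' i, log (1 + u i)) := by
  have hpos : ∀ i, 0 < 1 / (1 + u i) := fun i => by have := hu i; positivity
  have hlog : Summable fun i => log (1 / (1 + u i)) := by
    simpa only [one_div, log_inv] using (summable_log_one_add_of_summable hsum).neg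
  rw [← rexp_tsum_eq_tprod hpos hlog, ← tsum_neg]
  simp only [one_div, log_inv]

lemma tsum_log_one_add_le (hu : ∀ i, 0 ≤ u i) (hsum : Summable u) :
    ∑' i, log (1 + u i) ≤ ∑' i, u i :=
  (summable_log_one_add_of_summable hsum).tsum_le_tsum
    (fun i => by linarith [log_le_sub_one_of_pos (by linarith [hu i] : 0 < 1 + u i)]) hsum

lemma tsum_div_le_tsum_log_one_add {c : ℝ} (hu : ∀ i, 0 ≤ u i) (hsum : Summable u)
    (hc : ∀ i, u i ≤ c) : (∑' i, u i) / (1 + c) ≤ ∑' i, log (1 + u i) := by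
  rw [← tsum_div_const]
  refine (hsum.div_const _).tsum_le_tsum (fun i => ?_) (summable_log_one_add_of_summable hsum)
  have hpos : 0 < 1 + u i := by linarith [hu i]
  calc u i / (1 + c) ≤ u i / (1 + u i) :=
        div_le_div_of_nonneg_left (hu i) hpos (by linarith [hc i])
    _ = 1 - (1 + u i)⁻¹ := by field_simp; ring
    _ ≤ log (1 + u i) := one_sub_inv_le_log_of_pos hpos

end LogSum

lemma exp_neg_sub_exp_neg_le {a b : ℝ} (ha : 0 ≤ a) (hab : a ≤ b) :
    exp (-a) - exp (-b) ≤ b - a := by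
  have hexp : -(b - a) + 1 ≤ exp (-(b - a)) := add_one_le_exp _
  have hexp_a : exp (-a) ≤ 1 := exp_le_one_iff.mpr (by linarith)
  calc exp (-a) - exp (-b) = exp (-a) * (1 - exp (-(b - a))) := by
        rw [mul_sub, ← exp_add]; ring_nf
    _ ≤ 1 * (1 - exp (-(b - a))) :=
        mul_le_mul_of_nonneg_right hexp_a (sub_nonneg.2 (exp_le_one_iff.mpr (by linarith)))
    _ ≤ b - a := by linarith

noncomputable def qProd (t x : ℝ) : ℝ := ∏' k : ℕ, 1 / (1 + (1 - t) * x * t ^ (k + 1))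

section QProd

variable {t x : ℝ}

lemma hasSum_qTerm (ht0 : 0 ≤ t) (ht1 : t < 1) :
    HasSum (fun k : ℕ => (1 - t) * x * t ^ (k + 1)) (t * x) := by
  have hterm : (fun k : ℕ => (1 - t) * x * t ^ (k + 1)) = fun k => (1 - t) * x * t * t ^ k := by
    ext k; ring
  rw [hterm, show t * x = (1 - t) * x * t * (1 - t)⁻¹ by field_simp [sub_ne_zero.2 ht1.ne']]
  exact (hasSum_geometric_of_lt_one ht0 ht1).mul_left _

lemma qTerm_nonneg (ht0 : 0 ≤ t) (ht1 : t < 1) (hx : 0 ≤ x) (k : ℕ) :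
    0 ≤ (1 - t) * x * t ^ (k + 1) :=
  mul_nonneg (mul_nonneg (sub_nonneg.2 ht1.le) hx) (pow_nonneg ht0 _)

lemma qProd_eq_exp (ht0 : 0 ≤ t) (ht1 : t < 1) (hx : 0 ≤ x) :
    qProd t x = exp (-∑' k : ℕ, log (1 + (1 - t) * x * t ^ (k + 1))) :=
  tprod_one_div_one_add_eq_exp (qTerm_nonneg ht0 ht1 hx) (hasSum_qTerm ht0 ht1).summable

lemma exp_neg_mul_le_qProd (ht0 : 0 ≤ t) (ht1 : t < 1) (hx : 0 ≤ x) :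
    exp (-(t * x)) ≤ qProd t x := by
  rw [qProd_eq_exp ht0 ht1 hx, exp_le_exp, neg_le_neg_iff, ← (hasSum_qTerm ht0 ht1).tsum_eq]
  exact tsum_log_one_add_le (qTerm_nonneg ht0 ht1 hx) (hasSum_qTerm ht0 ht1).summable

lemma qProd_le_exp_neg (ht0 : 0 ≤ t) (ht1 : t < 1) (hx : 0 ≤ x) :
    qProd t x ≤ exp (-(t * x / (1 + (1 - t) * x))) := by
  rw [qProd_eq_exp ht0 ht1 hx, exp_le_exp, neg_le_neg_iff, ← (hasSum_qTerm ht0 ht1).tsum_eq]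
  refine tsum_div_le_tsum_log_one_add (qTerm_nonneg ht0 ht1 hx) (hasSum_qTerm ht0 ht1).summable
    fun k => ?_
  exact mul_le_of_le_one_right (mul_nonneg (sub_nonneg.2 ht1.le) hx) (pow_le_one₀ ht0 ht1.le)

lemma dist_exp_neg_qProd_le (ht0 : 0 ≤ t) (ht1 : t < 1) (hx : 0 ≤ x) :
    dist (exp (-x)) (qProd t x) ≤ exp (-(t * x / (1 + (1 - t) * x))) - exp (-x) := by
  have hlow : exp (-x) ≤ qProd t x :=
    (exp_le_exp.mpr (by nlinarith)).trans (exp_neg_mul_le_qProd ht0 ht1 hx)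
  rw [dist_comm, dist_eq_norm, norm_of_nonneg (by linarith)]
  linarith [qProd_le_exp_neg ht0 ht1 hx]

lemma sub_div_one_add_le (ht1 : t ≤ 1) (hx : 0 ≤ x) :
    x - t * x / (1 + (1 - t) * x) ≤ (1 - t) * (x * (x + 1)) := by
  have hs : 0 ≤ 1 - t := sub_nonneg.2 ht1
  rw [sub_le_comm, le_div_iff₀ (by positivity)]
  have hx2 : 0 ≤ x * x * (x + 1) := by positivity
  nlinarith [mul_nonneg (mul_nonneg hs hs) hx2]

lemma exp_neg_div_one_add_sub_exp_neg_le (ht0 : 0 ≤ t) (ht1 : t ≤ 1) (hx : 0 ≤ x) :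
    exp (-(t * x / (1 + (1 - t) * x))) - exp (-x) ≤ (1 - t) * (x * (x + 1)) := by
  have hs : 0 ≤ 1 - t := sub_nonneg.2 ht1
  have hle : t * x / (1 + (1 - t) * x) ≤ x :=
    (div_le_self (by positivity) (by nlinarith)).trans (mul_le_of_le_one_left hx ht1)
  exact (exp_neg_sub_exp_neg_le (by positivity) hle).trans (sub_div_one_add_le ht1 hx)

lemma div_one_add_le_div_one_add {M : ℝ} (ht0 : 0 ≤ t) (ht1 : t ≤ 1) (hM : 0 ≤ M)
    (hMx : M ≤ x) :
    t * M / (1 + (1 - t) * M) ≤ t * x / (1 + (1 - t) * x) := by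
  have hs : 0 ≤ 1 - t := sub_nonneg.2 ht1
  rw [div_le_div_iff₀ (by positivity) (by nlinarith)]
  nlinarith [mul_le_mul_of_nonneg_left hMx ht0]

end QProd

theorem stmt_1 :
    TendstoUniformlyOn
      (fun (t : ℝ) (x : ℝ) => ∏' k : ℕ, 1 / (1 + (1 - t) * x * t ^ (k + 1)))
      (fun x => Real.exp (-x)) (nhdsWithin 1 (Set.Ioo (0:ℝ) 1)) (Set.Ici (0:ℝ)) := by
  rw [Metric.tendstoUniformlyOn_iff]
  intro ε hε
  obtain ⟨M, hMε, hM⟩ : ∃ M, exp (-M) < ε ∧ 0 ≤ M :=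
    ((tendsto_exp_neg_atTop_nhds_zero.eventually (gt_mem_nhds hε)).and
      (eventually_ge_atTop 0)).exists
  have hTail : ∀ᶠ t in 𝓝 (1 : ℝ), exp (-(t * M / (1 + (1 - t) * M))) < ε := by
    have hcont : ContinuousAt (fun t : ℝ => exp (-(t * M / (1 + (1 - t) * M)))) 1 := by
      fun_prop (disch := norm_num)
    exact hcont.eventually (gt_mem_nhds (by simpa using hMε))
  have hHead : ∀ᶠ t in 𝓝 (1 : ℝ), (1 - t) * (M * (M + 1)) < ε := by
    have hcont : ContinuousAt (fun t : ℝ => (1 - t) * (M * (M + 1))) 1 := by fun_prop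
    exact hcont.eventually (gt_mem_nhds (by simpa using hε))
  filter_upwards [nhdsWithin_le_nhds hTail, nhdsWithin_le_nhds hHead, self_mem_nhdsWithin]
    with t htail hhead ⟨ht0, ht1⟩ x (hx : 0 ≤ x)
  refine (dist_exp_neg_qProd_le ht0.le ht1 hx).trans_lt ?_
  rcases le_total x M with hxM | hMx
  · calc _ ≤ (1 - t) * (x * (x + 1)) := exp_neg_div_one_add_sub_exp_neg_le ht0.le ht1.le hx
      _ ≤ (1 - t) * (M * (M + 1)) := by gcongr
      _ < ε := hhead
  · calc _ < exp (-(t * x / (1 + (1 - t) * x))) := sub_lt_self _ (exp_pos _)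
      _ ≤ exp (-(t * M / (1 + (1 - t) * M))) :=
          exp_le_exp.2 (neg_le_neg (div_one_add_le_div_one_add ht0.le ht1.le hM hMx))
      _ < ε := htail
end

section
/- Let f_n : ℝ → [0,1] be a sequence of functions such that each f_n is strictly decreasing with limit 1 at −∞ and 0 at +∞, and such that for each δ > 0, f_n → 1_{y < 0} uniformly on ℝ \ [−δ, δ]. Let X_n be random variables such that for each x ∈ ℝ, E[f_n(X_n − x)] → p(x), where p is a continuous probability distribution function. Then X_n converges in distribution to a random variable X with P(X < x) = p(x). -/
/-!
The function `y ↦ f n (y - x)` takes values in `[0, 1]` and, away from a `δ`-neighbourhood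
of `x`, is uniformly close to the indicator of `(-∞, x)`. Integrating against the law `mₙ` of
`Xₙ` gives, for large `n` and `e` the uniform error,
`∫ f n (y - (t - δ)) dmₙ - e ≤ mₙ (-∞, t] ≤ ∫ f n (y - (t + δ)) dmₙ + e`,
so by continuity of `p` the distribution functions of `Xₙ` converge to `p` everywhere.
Since `p` is continuous, it is the distribution function of its Stieltjes measure `ν`, with no
atoms, and convergence of distribution functions on the π-system of intervals `(a, b]` yields
weak convergence to `ν` by the portmanteau theorem.
-/

open Filter MeasureTheory ProbabilityTheory Set Topology

section Sandwich

variable {m : Measure ℝ} [IsProbabilityMeasure m] {φ : ℝ → ℝ} {t e : ℝ}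

lemma integral_le_measureReal_Iic_add (hφ : Integrable φ m) (he : 0 ≤ e)
    (hle_one : ∀ y, φ y ≤ 1) (hsmall : ∀ y, t < y → φ y ≤ e) :
    ∫ y, φ y ∂m ≤ m.real (Iic t) + e := by
  have hind : Integrable ((Iic t).indicator 1) m :=
    (integrable_const (1 : ℝ)).indicator measurableSet_Iic
  calc ∫ y, φ y ∂m ≤ ∫ y, ((Iic t).indicator 1 y + e) ∂m := by
        refine integral_mono hφ (hind.add (integrable_const e)) fun y => ?_
        by_cases hy : y ≤ t
        · simp only [indicator_of_mem (show y ∈ Iic t from hy), Pi.one_apply]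
          linarith [hle_one y]
        · simp only [indicator_of_notMem (show y ∉ Iic t from hy), zero_add]
          exact hsmall y (not_le.1 hy)
    _ = m.real (Iic t) + e := by
        rw [integral_add hind (integrable_const e), integral_indicator_one measurableSet_Iic]
        simp

lemma measureReal_Iic_sub_le_integral (hφ : Integrable φ m) (he : 0 ≤ e)
    (hnonneg : ∀ y, 0 ≤ φ y) (hlarge : ∀ y, y ≤ t → 1 - e ≤ φ y) :
    m.real (Iic t) - e ≤ ∫ y, φ y ∂m := by
  have hind : Integrable ((Iic t).indicator 1) m :=
    (integrable_const (1 : ℝ)).indicator measurableSet_Iic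
  calc m.real (Iic t) - e = ∫ y, ((Iic t).indicator 1 y - e) ∂m := by
        rw [integral_sub hind (integrable_const e), integral_indicator_one measurableSet_Iic]
        simp
    _ ≤ ∫ y, φ y ∂m := by
        refine integral_mono (hind.sub (integrable_const e)) hφ fun y => ?_
        by_cases hy : y ≤ t
        · simpa only [indicator_of_mem (show y ∈ Iic t from hy), Pi.one_apply] using hlarge y hy
        · simp only [indicator_of_notMem (show y ∉ Iic t from hy), zero_sub]
          linarith [hnonneg y]

end Sandwich

lemma eventually_tail_bounds_of_tendstoUniformlyOn {ι : Type*} {l : Filter ι}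
    {f : ι → ℝ → ℝ} {δ e : ℝ}
    (hU : TendstoUniformlyOn f (fun y => if y < 0 then 1 else 0) l (Icc (-δ) δ)ᶜ)
    (hδ : 0 ≤ δ) (he : 0 < e) :
    ∀ᶠ n in l, (∀ y, δ < y → f n y ≤ e) ∧ (∀ y, y < -δ → 1 - e ≤ f n y) := by
  filter_upwards [Metric.tendstoUniformlyOn_iff.1 hU e he] with n hn
  constructor
  · intro y hy
    have hclose := hn y (fun hy' => hy'.2.not_gt hy)
    rw [if_neg (not_lt.2 (by linarith)), Real.dist_eq, abs_lt] at hclose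
    linarith [hclose.1]
  · intro y hy
    have hclose := hn y (fun hy' => hy'.1.not_gt hy)
    rw [if_pos (show y < 0 by linarith), Real.dist_eq, abs_lt] at hclose
    linarith [hclose.2]

lemma integrable_comp_sub_of_mem_Icc {ρ : Measure ℝ} [IsFiniteMeasure ρ] {g : ℝ → ℝ}
    (hg : Measurable g) (hg01 : ∀ y, g y ∈ Icc (0 : ℝ) 1) (x : ℝ) :
    Integrable (fun y => g (y - x)) ρ := by
  refine Integrable.of_bound (hg.comp (measurable_sub_const x)).aestronglyMeasurable 1
    (Eventually.of_forall fun y => ?_)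
  rw [Real.norm_eq_abs, abs_le]
  exact ⟨by linarith [(hg01 (y - x)).1], (hg01 (y - x)).2⟩

section DistributionFunction

variable {ι : Type*} {l : Filter ι} {m : ι → Measure ℝ} [∀ n, IsProbabilityMeasure (m n)]
  {f : ι → ℝ → ℝ} {p : ℝ → ℝ} {t : ℝ}

lemma eventually_lt_measureReal_Iic (hf01 : ∀ n x, f n x ∈ Icc (0 : ℝ) 1)
    (hfm : ∀ n, Measurable (f n))
    (hfU : ∀ δ : ℝ, 0 < δ →
      TendstoUniformlyOn f (fun y => if y < 0 then 1 else 0) l ((Icc (-δ) δ)ᶜ))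
    (hp : ContinuousAt p t)
    (hconv : ∀ x, Tendsto (fun n => ∫ y, f n (y - x) ∂(m n)) l (𝓝 (p x)))
    {a : ℝ} (ha : a < p t) :
    ∀ᶠ n in l, a < (m n).real (Iic t) := by
  set e := (p t - a) / 3 with he_def
  have he : 0 < e := by linarith
  have hshift : Tendsto (fun δ => t - δ) (𝓝[>] 0) (𝓝 t) := by
    simpa using ((continuous_sub_left t).tendsto 0).mono_left nhdsWithin_le_nhds
  obtain ⟨δ, hpδ, hδ⟩ : ∃ δ, p t - e < p (t - δ) ∧ 0 < δ :=
    (((hp.tendsto.comp hshift).eventually_const_lt (by linarith)).and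
      self_mem_nhdsWithin).exists
  filter_upwards [eventually_tail_bounds_of_tendstoUniformlyOn (hfU δ hδ) hδ.le he,
    (hconv (t - δ)).eventually_const_lt (sub_lt_self _ he)] with n htail hint
  have := integral_le_measureReal_Iic_add (m := m n) (t := t)
    (integrable_comp_sub_of_mem_Icc (hfm n) (hf01 n) _) he.le (fun y => (hf01 n _).2)
    (fun y hy => htail.1 (y - (t - δ)) (by linarith))
  linarith

lemma eventually_measureReal_Iic_lt (hf01 : ∀ n x, f n x ∈ Icc (0 : ℝ) 1)
    (hfm : ∀ n, Measurable (f n))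
    (hfU : ∀ δ : ℝ, 0 < δ →
      TendstoUniformlyOn f (fun y => if y < 0 then 1 else 0) l ((Icc (-δ) δ)ᶜ))
    (hp : ContinuousAt p t)
    (hconv : ∀ x, Tendsto (fun n => ∫ y, f n (y - x) ∂(m n)) l (𝓝 (p x)))
    {b : ℝ} (hb : p t < b) :
    ∀ᶠ n in l, (m n).real (Iic t) < b := by
  set e := (b - p t) / 3 with he_def
  have he : 0 < e := by linarith
  have hshift : Tendsto (fun δ => t + δ) (𝓝[>] 0) (𝓝 t) := by
    simpa using ((continuous_const_add t).tendsto 0).mono_left nhdsWithin_le_nhds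
  obtain ⟨δ, hpδ, hδ⟩ : ∃ δ, p (t + δ) < p t + e ∧ 0 < δ :=
    (((hp.tendsto.comp hshift).eventually_lt_const (by linarith)).and
      self_mem_nhdsWithin).exists
  filter_upwards [eventually_tail_bounds_of_tendstoUniformlyOn (hfU (δ / 2) (by positivity))
      (by positivity) he,
    (hconv (t + δ)).eventually_lt_const (lt_add_of_pos_right _ he)] with n htail hint
  have := measureReal_Iic_sub_le_integral (m := m n) (t := t)
    (integrable_comp_sub_of_mem_Icc (hfm n) (hf01 n) _) he.le (fun y => (hf01 n _).1)
    (fun y hy => htail.2 (y - (t + δ)) (by linarith))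
  linarith

theorem tendsto_measureReal_Iic_of_tendsto_integral (hf01 : ∀ n x, f n x ∈ Icc (0 : ℝ) 1)
    (hfm : ∀ n, Measurable (f n))
    (hfU : ∀ δ : ℝ, 0 < δ →
      TendstoUniformlyOn f (fun y => if y < 0 then 1 else 0) l ((Icc (-δ) δ)ᶜ))
    (hp : ContinuousAt p t)
    (hconv : ∀ x, Tendsto (fun n => ∫ y, f n (y - x) ∂(m n)) l (𝓝 (p x))) :
    Tendsto (fun n => (m n).real (Iic t)) l (𝓝 (p t)) :=
  tendsto_order.2 ⟨fun _ ha => eventually_lt_measureReal_Iic hf01 hfm hfU hp hconv ha,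
    fun _ hb => eventually_measureReal_Iic_lt hf01 hfm hfU hp hconv hb⟩

end DistributionFunction

lemma ProbabilityMeasure.tendsto_of_tendsto_measureReal_Iic {ι : Type*} {l : Filter ι}
    [l.IsCountablyGenerated] {μ : ι → ProbabilityMeasure ℝ} {ν : ProbabilityMeasure ℝ}
    (h : ∀ t, Tendsto (fun i => (μ i : Measure ℝ).real (Iic t)) l
      (𝓝 ((ν : Measure ℝ).real (Iic t)))) :
    Tendsto μ l (𝓝 ν) := by
  have hIoc (ρ : Measure ℝ) [IsFiniteMeasure ρ] {a b : ℝ} (hab : a ≤ b) :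
      ρ.real (Ioc a b) = ρ.real (Iic b) - ρ.real (Iic a) := by
    rw [← Iic_sdiff_Iic, measureReal_sdiff (Iic_subset_Iic.2 hab) measurableSet_Iic]
  refine (isPiSystem_Ioc (id : ℝ → ℝ) id).tendsto_probabilityMeasure_of_tendsto_of_mem
    ?_ ?_ ?_
  · rintro _ ⟨a, b, -, rfl⟩
    exact measurableSet_Ioc
  · intro u hu x hx
    obtain ⟨ε, hε, hball⟩ := Metric.isOpen_iff.1 hu x hx
    refine ⟨Ioc (x - ε / 2) (x + ε / 2),
      ⟨x - ε / 2, x + ε / 2, show x - ε / 2 < x + ε / 2 by linarith, rfl⟩,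
      mem_of_superset (Ioo_mem_nhds (by linarith) (by linarith)) Ioo_subset_Ioc_self,
      fun y hy => hball ?_⟩
    rw [Metric.mem_ball, Real.dist_eq, abs_lt]
    constructor <;> linarith [hy.1, hy.2]
  · rintro _ ⟨a, b, hab, rfl⟩
    rw [← NNReal.tendsto_coe]
    simp only [← ProbabilityMeasure.measureReal_eq_coe_coeFn, id]
    rw [hIoc _ (a := a) (b := b) hab.le]
    exact ((h b).sub (h a)).congr fun i => (hIoc _ hab.le).symm

theorem stmt_3_general
    {Ω : ℕ → Type*} [∀ n, MeasurableSpace (Ω n)]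
    (μ : ∀ n, Measure (Ω n)) [∀ n, IsProbabilityMeasure (μ n)]
    (X : ∀ n, Ω n → ℝ) (hXm : ∀ n, Measurable (X n))
    (f : ℕ → ℝ → ℝ)
    (hf01 : ∀ n x, f n x ∈ Set.Icc (0:ℝ) 1)
    (hanti : ∀ n, StrictAnti (f n))
    (hfU : ∀ δ : ℝ, 0 < δ →
      TendstoUniformlyOn f (fun y => if y < 0 then 1 else 0) atTop ((Set.Icc (-δ) δ)ᶜ))
    (p : ℝ → ℝ) (hp : Continuous p) (hpmono : Monotone p)
    (hp0 : Tendsto p atBot (nhds 0)) (hp1 : Tendsto p atTop (nhds 1))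
    (hconv : ∀ x : ℝ,
      Tendsto (fun n => ∫ ω, f n (X n ω - x) ∂(μ n)) atTop (nhds (p x))) :
    ∃ ν : Measure ℝ, IsProbabilityMeasure ν ∧
      (∀ x : ℝ, (ν (Set.Iio x)).toReal = p x) ∧
      (∀ g : BoundedContinuousFunction ℝ ℝ,
        Tendsto (fun n => ∫ ω, g (X n ω) ∂(μ n)) atTop (nhds (∫ y, g y ∂ν))) := by
  let law n : ProbabilityMeasure ℝ :=
    ⟨(μ n).map (X n), Measure.isProbabilityMeasure_map (hXm n).aemeasurable⟩
  have hmap n {g : ℝ → ℝ} (hg : Measurable g) :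
      ∫ y, g y ∂(law n : Measure ℝ) = ∫ ω, g (X n ω) ∂(μ n) :=
    integral_map (hXm n).aemeasurable hg.aestronglyMeasurable
  have hfm n : Measurable (f n) := (hanti n).antitone.measurable
  let F : StieltjesFunction ℝ := ⟨p, hpmono, fun x => hp.continuousWithinAt⟩
  have hF := F.isProbabilityMeasure hp0 hp1
  have hcdf t : Tendsto (fun n => (law n : Measure ℝ).real (Iic t)) atTop
      (𝓝 (F.measure.real (Iic t))) := by
    rw [← cdf_eq_real, cdf_measure_stieltjesFunction F hp0 hp1]
    refine tendsto_measureReal_Iic_of_tendsto_integral hf01 hfm hfU hp.continuousAt fun x => ?_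
    exact (hconv x).congr fun n => (hmap n ((hfm n).comp (measurable_sub_const x))).symm
  refine ⟨F.measure, hF, fun x => ?_, fun g => ?_⟩
  · rw [F.measure_Iio hp0, hp.continuousWithinAt.leftLim_eq, sub_zero,
      ENNReal.toReal_ofReal (hpmono.le_of_tendsto hp0 x)]
  · simpa only [hmap _ g.continuous.measurable, ProbabilityMeasure.coe_mk] using
      ProbabilityMeasure.tendsto_iff_forall_integral_tendsto.1
        (ProbabilityMeasure.tendsto_of_tendsto_measureReal_Iic (ν := ⟨F.measure, hF⟩) hcdf) g

theorem stmt_3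
    {Ω : ℕ → Type*} [∀ n, MeasurableSpace (Ω n)]
    (μ : ∀ n, Measure (Ω n)) [∀ n, IsProbabilityMeasure (μ n)]
    (X : ∀ n, Ω n → ℝ) (hXm : ∀ n, Measurable (X n))
    (f : ℕ → ℝ → ℝ)
    (hf01 : ∀ n x, f n x ∈ Set.Icc (0:ℝ) 1)
    (hanti : ∀ n, StrictAnti (f n))
    (hlim1 : ∀ n, Tendsto (f n) atBot (nhds 1))
    (hlim0 : ∀ n, Tendsto (f n) atTop (nhds 0))
    (hfU : ∀ δ : ℝ, 0 < δ →
      TendstoUniformlyOn f (fun y => if y < 0 then 1 else 0) atTop ((Set.Icc (-δ) δ)ᶜ))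
    (p : ℝ → ℝ) (hp : Continuous p) (hpmono : Monotone p)
    (hp0 : Tendsto p atBot (nhds 0)) (hp1 : Tendsto p atTop (nhds 1))
    (hconv : ∀ x : ℝ,
      Tendsto (fun n => ∫ ω, f n (X n ω - x) ∂(μ n)) atTop (nhds (p x))) :
    ∃ ν : Measure ℝ, IsProbabilityMeasure ν ∧
      (∀ x : ℝ, (ν (Set.Iio x)).toReal = p x) ∧
      (∀ g : BoundedContinuousFunction ℝ ℝ,
        Tendsto (fun n => ∫ ω, g (X n ω) ∂(μ n)) atTop (nhds (∫ y, g y ∂ν))) :=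
  stmt_3_general μ X hXm f hf01 hanti hfU p hp hpmono hp0 hp1 hconv
end

section
/- Let δ ∈ (0,1), r ∈ (0,1), a ∈ (0, 1−δ]. The function S_{a,r}(z) = ∑_{j=0}^∞ [log(1 + a r^j e^z) − log(1 + a r^j e^{−z})] is an odd function near 0, its power series expansion at 0 has the form S_{a,r}(z) = c_1 z + c_3 z^3 + c_5 z^5 + ⋯ (all even coefficients vanish), where c_{2l+1} = (2/((2l+1)!)) ∑_{k=1}^∞ k^{2l} (−1)^{k+1} a^k / (1 − r^k). Moreover, for every l ≥ 1 one has c_{2l+1} ≤ 1/((1−r) δ^{2l+1}). -/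
/-!
Expanding both logarithms in their Taylor series gives
`log (1 + w e^z) - log (1 + w e^{-z}) = ∑ₖ 2 (-1)^k w^{k+1} / (k+1) · sinh ((k+1) z)`.
With `w = a r^j`, summing the geometric series in `j` first yields
`S z = ∑ₖ 2 (-1)^k a^{k+1} / ((k+1)(1 - r^{k+1})) · sinh ((k+1) z)`, and expanding each `sinh`
and collecting powers of `z` gives the odd power series. Both interchanges of summation are
justified by absolute convergence as long as `a e^{‖z‖} < 1`.

For the bound, `(k+1)^{2l} ≤ (2l)! C(k+2l, 2l)` and `∑ₖ C(k+2l, 2l) a^k = (1-a)^{-(2l+1)}`, so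
`c_{2l+1} ≤ 2a / ((2l+1)(1-r)(1-a)^{2l+1})`.
-/

open Complex Nat

theorem Complex.norm_sinh_le_exp_norm (w : ℂ) : ‖sinh w‖ ≤ Real.exp ‖w‖ := by
  have h : ‖2 * sinh w‖ ≤ 2 * Real.exp ‖w‖ := by
    rw [two_sinh, two_mul]
    refine (norm_sub_le _ _).trans (add_le_add (norm_exp_le_exp_norm w) ?_)
    simpa using norm_exp_le_exp_norm (-w)
  rw [norm_mul, Complex.norm_two] at h
  linarith

theorem Real.sinh_le_exp (x : ℝ) : Real.sinh x ≤ Real.exp x := by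
  linarith [Real.sinh_add_cosh x, Real.cosh_pos x]

theorem hasSum_log_one_add_mul_exp_sub (x z : ℂ) (h : ‖x‖ * Real.exp ‖z‖ < 1) :
    HasSum (fun k : ℕ => 2 * (-1) ^ k * x ^ (k + 1) / (k + 1) * sinh ((k + 1) * z))
      (log (1 + x * exp z) - log (1 + x * exp (-z))) := by
  have hlt : ∀ w : ℂ, ‖w‖ = ‖z‖ → ‖x * exp w‖ < 1 := fun w hw => by
    calc ‖x * exp w‖ ≤ ‖x‖ * Real.exp ‖w‖ := by
          rw [norm_mul]; gcongr; exact norm_exp_le_exp_norm w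
      _ < 1 := hw ▸ h
  have hlog := (hasSum_taylorSeries_log (hlt z rfl)).sub
    (hasSum_taylorSeries_log (hlt (-z) (norm_neg z)))
  rw [← hasSum_nat_add_iff' 1] at hlog
  simp only [Finset.range_one, Finset.sum_singleton, CharP.cast_eq_zero, div_zero, sub_zero]
    at hlog
  refine hlog.congr_fun fun k => ?_
  rw [mul_pow, mul_pow, ← exp_nat_mul, ← exp_nat_mul, Complex.sinh]
  push_cast
  rw [mul_neg]
  ring

theorem norm_two_mul_pow_div_mul_sinh_le (x z : ℂ) (k : ℕ) :
    ‖2 * (-1) ^ k * x ^ (k + 1) / (k + 1) * sinh ((k + 1) * z)‖ ≤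
      2 * (‖x‖ * Real.exp ‖z‖) ^ (k + 1) := by
  have hk : (1 : ℝ) ≤ k + 1 := by linarith [k.cast_nonneg (α := ℝ)]
  have hsinh := norm_sinh_le_exp_norm ((k + 1) * z)
  have hnk : ‖((k : ℂ) + 1)‖ = k + 1 := by exact_mod_cast Complex.norm_natCast (k + 1)
  rw [norm_mul, hnk] at hsinh
  simp only [norm_mul, norm_div, norm_pow, norm_neg, norm_one, one_pow, mul_one, hnk,
    Complex.norm_two]
  rw [mul_pow, ← Real.exp_nat_mul, Nat.cast_add_one]
  calc 2 * ‖x‖ ^ (k + 1) / (k + 1) * ‖sinh ((k + 1) * z)‖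
      ≤ 2 * ‖x‖ ^ (k + 1) * ‖sinh ((k + 1) * z)‖ := by
        gcongr; exact div_le_self (by positivity) hk
    _ ≤ 2 * (‖x‖ ^ (k + 1) * Real.exp ((k + 1) * ‖z‖)) := by
        rw [← mul_assoc]; gcongr

theorem tsum_log_one_add_mul_exp_sub_eq_tsum_sinh (a r z : ℂ) (hr : ‖r‖ < 1)
    (ha : ‖a‖ * Real.exp ‖z‖ < 1) :
    ∑' j : ℕ, (log (1 + a * r ^ j * exp z) - log (1 + a * r ^ j * exp (-z))) =
      ∑' k : ℕ, 2 * (-1) ^ k * a ^ (k + 1) / ((k + 1) * (1 - r ^ (k + 1))) *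
        sinh ((k + 1) * z) := by
  set q := ‖a‖ * Real.exp ‖z‖
  set f : ℕ → ℕ → ℂ := fun j k =>
    2 * (-1) ^ k * (a * r ^ j) ^ (k + 1) / (k + 1) * sinh ((k + 1) * z)
  have hq : ∀ j : ℕ, ‖a * r ^ j‖ * Real.exp ‖z‖ = q * ‖r‖ ^ j := fun j => by
    rw [norm_mul, norm_pow]; ring
  have hrj : ∀ j : ℕ, ‖r‖ ^ j ≤ 1 := fun j => pow_le_one₀ (norm_nonneg r) hr.le
  have hsum : Summable (Function.uncurry f) := by
    have hgeo_r : Summable fun j : ℕ => 2 * ‖r‖ ^ j :=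
      (summable_geometric_of_lt_one (norm_nonneg r) hr).mul_left 2
    have hgeo_q : Summable fun k : ℕ => q ^ (k + 1) :=
      (summable_nat_add_iff 1).2 (summable_geometric_of_lt_one (by positivity) ha)
    refine .of_norm_bounded (hgeo_r.mul_of_nonneg hgeo_q (fun j => by positivity)
      (fun k => by positivity)) ?_
    rintro ⟨j, k⟩
    refine (norm_two_mul_pow_div_mul_sinh_le _ z k).trans ?_
    rw [hq, mul_pow, mul_assoc, mul_comm (q ^ _)]
    gcongr
    exact pow_le_of_le_one (by positivity) (hrj j) k.add_one_ne_zero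
  have hrow : ∀ j,
      HasSum (f j) (log (1 + a * r ^ j * exp z) - log (1 + a * r ^ j * exp (-z))) :=
    fun j => hasSum_log_one_add_mul_exp_sub _ z <| (hq j).trans_lt <|
      (mul_le_of_le_one_right (by positivity) (hrj j)).trans_lt ha
  calc _ = ∑' j, ∑' k, f j k := tsum_congr fun j => (hrow j).tsum_eq.symm
    _ = ∑' k, ∑' j, f j k := hsum.tsum_comm.symm
    _ = _ := tsum_congr fun k => ?_
  have hrk : ‖r ^ (k + 1)‖ < 1 := by
    rw [norm_pow]; exact pow_lt_one₀ (norm_nonneg r) hr k.add_one_ne_zero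
  have hcol : ∀ j, f j k = 2 * (-1) ^ k * a ^ (k + 1) / (k + 1) * sinh ((k + 1) * z) *
      (r ^ (k + 1)) ^ j := fun j => by
    simp only [f]; ring
  rw [tsum_congr hcol, tsum_mul_left, tsum_geometric_of_norm_lt_one hrk]
  simp only [div_eq_mul_inv, mul_inv]
  ring

theorem tsum_mul_sinh_eq_tsum_mul_pow (b : ℕ → ℂ) (z : ℂ)
    (hb : Summable fun k : ℕ => ‖b k‖ * Real.exp ((k + 1) * ‖z‖)) :
    ∑' k : ℕ, b k * sinh ((k + 1) * z) =
      ∑' l : ℕ, (∑' k : ℕ, b k * (k + 1) ^ (2 * l + 1)) / (2 * l + 1)! * z ^ (2 * l + 1) := by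
  set g : ℕ → ℕ → ℂ := fun k l => b k * (((k + 1) * z) ^ (2 * l + 1) / (2 * l + 1)!)
  have hnorm : ∀ k l, ‖g k l‖ = ‖b k‖ * (((k + 1) * ‖z‖) ^ (2 * l + 1) / (2 * l + 1)!) :=
    fun k l => by
      have hnk : ‖((k : ℂ) + 1)‖ = k + 1 := by exact_mod_cast Complex.norm_natCast (k + 1)
      simp only [g, norm_mul, norm_div, norm_pow, hnk, Complex.norm_natCast]
  have hsum : Summable (Function.uncurry g) := by
    refine .of_norm ((summable_prod_of_nonneg fun p => norm_nonneg _).2 ⟨fun k => ?_, ?_⟩)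
    · simpa only [Function.uncurry_apply_pair, hnorm] using
        ((Real.hasSum_sinh _).mul_left ‖b k‖).summable
    · refine hb.of_nonneg_of_le (fun k => tsum_nonneg fun l => norm_nonneg _) fun k => ?_
      simp only [Function.uncurry_apply_pair, hnorm, ((Real.hasSum_sinh _).mul_left _).tsum_eq]
      gcongr
      exact Real.sinh_le_exp _
  calc _ = ∑' k, ∑' l, g k l :=
        tsum_congr fun k => ((hasSum_sinh _).mul_left (b k)).tsum_eq.symm
    _ = ∑' l, ∑' k, g k l := hsum.tsum_comm.symm
    _ = _ := tsum_congr fun l => ?_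
  have hterm : ∀ k, g k l = b k * (k + 1) ^ (2 * l + 1) * (z ^ (2 * l + 1) / (2 * l + 1)!) :=
    fun k => by simp only [g]; rw [mul_pow]; ring
  rw [tsum_congr hterm, tsum_mul_right]
  ring

theorem summable_norm_sinh_coeff_mul_exp (a r z : ℂ) (hr : ‖r‖ < 1)
    (ha : ‖a‖ * Real.exp ‖z‖ < 1) :
    Summable fun k : ℕ => ‖2 * (-1) ^ k * a ^ (k + 1) / ((k + 1) * (1 - r ^ (k + 1)))‖ *
      Real.exp ((k + 1) * ‖z‖) := by
  have hgeo : Summable fun k : ℕ => 2 / (1 - ‖r‖) * (‖a‖ * Real.exp ‖z‖) ^ (k + 1) :=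
    ((summable_nat_add_iff 1).2 (summable_geometric_of_lt_one (by positivity) ha)).mul_left _
  refine hgeo.of_nonneg_of_le (fun k => by positivity) fun k => ?_
  have hk : (1 : ℝ) ≤ ‖((k : ℂ) + 1)‖ := by
    rw [← Nat.cast_add_one, Complex.norm_natCast, Nat.cast_add_one]
    linarith [k.cast_nonneg (α := ℝ)]
  have hrk : 1 - ‖r‖ ≤ ‖1 - r ^ (k + 1)‖ := by
    refine le_trans ?_ (norm_sub_norm_le _ _)
    have := pow_le_of_le_one (norm_nonneg r) hr.le k.add_one_ne_zero
    rw [norm_one, norm_pow]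
    linarith
  have h1r : 0 < 1 - ‖r‖ := by linarith
  rw [mul_pow, ← Real.exp_nat_mul, Nat.cast_add_one, ← mul_assoc]
  gcongr
  simp only [norm_div, norm_mul, norm_pow, norm_neg, norm_one, one_pow, mul_one, Complex.norm_two]
  calc 2 * ‖a‖ ^ (k + 1) / (‖(k : ℂ) + 1‖ * ‖1 - r ^ (k + 1)‖)
      ≤ 2 * ‖a‖ ^ (k + 1) / (1 * (1 - ‖r‖)) := by
        gcongr
    _ = 2 / (1 - ‖r‖) * ‖a‖ ^ (k + 1) := by ring

theorem tsum_log_one_add_mul_exp_sub_eq_tsum_pow (a r z : ℂ) (hr : ‖r‖ < 1)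
    (ha : ‖a‖ * Real.exp ‖z‖ < 1) :
    ∑' j : ℕ, (log (1 + a * r ^ j * exp z) - log (1 + a * r ^ j * exp (-z))) =
      ∑' l : ℕ, 2 / (2 * l + 1)! *
        (∑' k : ℕ, (k + 1) ^ (2 * l) * (-1) ^ k * a ^ (k + 1) / (1 - r ^ (k + 1))) *
          z ^ (2 * l + 1) := by
  rw [tsum_log_one_add_mul_exp_sub_eq_tsum_sinh a r z hr ha,
    tsum_mul_sinh_eq_tsum_mul_pow _ z (summable_norm_sinh_coeff_mul_exp a r z hr ha)]
  refine tsum_congr fun l => ?_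
  congr 1
  rw [div_mul_eq_mul_div, ← tsum_mul_left]
  congr 1
  refine tsum_congr fun k => ?_
  have hk : (k : ℂ) + 1 ≠ 0 := by exact_mod_cast k.add_one_ne_zero
  field_simp
  ring

theorem abs_add_one_pow_mul_neg_one_pow_div_le {a r : ℝ} (ha : 0 ≤ a) (hr0 : 0 ≤ r)
    (hr1 : r < 1) (m k : ℕ) :
    |(k + 1 : ℝ) ^ m * (-1) ^ k * a ^ (k + 1) / (1 - r ^ (k + 1))| ≤
      a / (1 - r) * (m ! * ((k + m).choose m * a ^ k)) := by
  have hrk : r ^ (k + 1) ≤ r := pow_le_of_le_one hr0 hr1.le k.add_one_ne_zero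
  have hpow : ((k + 1 : ℕ) : ℝ) ^ m ≤ m ! * (k + m).choose m := by
    exact_mod_cast (Nat.pow_succ_le_ascFactorial (k + 1) m).trans_eq
      (Nat.ascFactorial_eq_factorial_mul_choose k m)
  push_cast at hpow
  rw [abs_div, abs_mul, abs_mul, abs_neg_one_pow, mul_one, abs_of_nonneg (by positivity),
    abs_of_nonneg (by positivity), abs_of_pos (by linarith)]
  calc (k + 1 : ℝ) ^ m * a ^ (k + 1) / (1 - r ^ (k + 1))
      ≤ m ! * (k + m).choose m * a ^ (k + 1) / (1 - r) := by
        gcongr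
    _ = _ := by ring

theorem tsum_add_one_pow_mul_neg_one_pow_div_le {a r : ℝ} (ha0 : 0 ≤ a) (ha1 : a < 1)
    (hr0 : 0 ≤ r) (hr1 : r < 1) (m : ℕ) :
    ∑' k : ℕ, (k + 1 : ℝ) ^ m * (-1) ^ k * a ^ (k + 1) / (1 - r ^ (k + 1)) ≤
      a / (1 - r) * (m ! / (1 - a) ^ (m + 1)) := by
  have hgeo : HasSum (fun k : ℕ => a / (1 - r) * (m ! * ((k + m).choose m * a ^ k)))
      (a / (1 - r) * (m ! / (1 - a) ^ (m + 1))) := by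
    simpa only [mul_one_div] using ((hasSum_choose_mul_geometric_of_norm_lt_one m
      (by rwa [Real.norm_of_nonneg ha0])).mul_left (m ! : ℝ)).mul_left (a / (1 - r))
  refine (le_abs_self _).trans ?_
  exact tsum_of_norm_bounded hgeo fun k => by
    rw [Real.norm_eq_abs]; exact abs_add_one_pow_mul_neg_one_pow_div_le ha0 hr0 hr1 m k

theorem two_div_factorial_mul_tsum_le {δ a r : ℝ} (hδ : 0 < δ) (ha0 : 0 ≤ a)
    (ha : a ≤ 1 - δ) (hr0 : 0 ≤ r) (hr1 : r < 1) {l : ℕ} (hl : 1 ≤ l) :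
    2 / (2 * l + 1)! *
        ∑' k : ℕ, (k + 1 : ℝ) ^ (2 * l) * (-1) ^ k * a ^ (k + 1) / (1 - r ^ (k + 1)) ≤
      1 / ((1 - r) * δ ^ (2 * l + 1)) := by
  have hfact : ((2 * l + 1)! : ℝ) = (2 * l + 1) * (2 * l)! := by
    push_cast [Nat.factorial_succ]; ring
  have hl' : (1 : ℝ) ≤ l := by exact_mod_cast hl
  calc _ ≤ 2 / (2 * l + 1)! * (a / (1 - r) * ((2 * l)! / (1 - a) ^ (2 * l + 1))) := by
        gcongr
        exact tsum_add_one_pow_mul_neg_one_pow_div_le ha0 (by linarith) hr0 hr1 (2 * l)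
    _ = 2 * a / (2 * l + 1) * (1 / ((1 - r) * (1 - a) ^ (2 * l + 1))) := by
        rw [hfact]; field_simp
    _ ≤ 1 * (1 / ((1 - r) * δ ^ (2 * l + 1))) := by
        have hpos : 0 < (1 - r) * δ ^ (2 * l + 1) := mul_pos (by linarith) (by positivity)
        refine mul_le_mul (div_le_one_of_le₀ (by linarith) (by positivity))
          (one_div_le_one_div_of_le hpos ?_) (one_div_nonneg.2 ?_) zero_le_one
        · gcongr
          linarith
        · exact mul_nonneg (by linarith) (pow_nonneg (by linarith) _)
    _ = _ := one_mul _

theorem stmt_6 (δ r a : ℝ) (hδ : δ ∈ Set.Ioo (0:ℝ) 1) (hr : r ∈ Set.Ioo (0:ℝ) 1)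
    (ha : a ∈ Set.Ioc (0:ℝ) (1 - δ))
    (S : ℂ → ℂ)
    (hS : ∀ z : ℂ, S z = ∑' j : ℕ,
      (Complex.log (1 + (a : ℂ) * (r : ℂ) ^ j * Complex.exp z)
        - Complex.log (1 + (a : ℂ) * (r : ℂ) ^ j * Complex.exp (-z))))
    (c : ℕ → ℝ)
    (hc : ∀ l : ℕ, c l = 2 / (Nat.factorial (2 * l + 1) : ℝ) *
      ∑' k : ℕ, ((k + 1 : ℝ)) ^ (2 * l) * (-1 : ℝ) ^ k * a ^ (k + 1) / (1 - r ^ (k + 1))) :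
    (∃ ε > 0, ∀ z : ℂ, ‖z‖ < ε →
      S (-z) = - S z ∧ S z = ∑' l : ℕ, (c l : ℂ) * z ^ (2 * l + 1)) ∧
    (∀ l : ℕ, 1 ≤ l → c l ≤ 1 / ((1 - r) * δ ^ (2 * l + 1))) := by
  obtain ⟨hδ0, -⟩ := hδ
  obtain ⟨hr0, hr1⟩ := hr
  obtain ⟨ha0, ha1⟩ := ha
  have ha_lt_one : a < 1 := by linarith
  refine ⟨⟨-Real.log a, neg_pos.2 (Real.log_neg ha0 ha_lt_one), fun z hz => ⟨?_, ?_⟩⟩,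
    fun l hl => hc l ▸ two_div_factorial_mul_tsum_le hδ0 ha0.le ha1 hr0.le hr1 hl⟩
  · rw [hS, hS, ← tsum_neg]
    exact tsum_congr fun j => by rw [neg_neg, neg_sub]
  · have hnorm_r : ‖(r : ℂ)‖ < 1 := by rwa [Complex.norm_real, Real.norm_of_nonneg hr0.le]
    have hnorm_a : ‖(a : ℂ)‖ * Real.exp ‖z‖ < 1 := by
      rw [Complex.norm_real, Real.norm_of_nonneg ha0.le]
      calc a * Real.exp ‖z‖ < a * Real.exp (-Real.log a) := by gcongr
        _ = 1 := by rw [Real.exp_neg, Real.exp_log ha0, mul_inv_cancel₀ ha0.ne']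
    rw [hS, tsum_log_one_add_mul_exp_sub_eq_tsum_pow _ _ z hnorm_r hnorm_a]
    refine tsum_congr fun l => ?_
    rw [hc, Complex.ofReal_mul, Complex.ofReal_tsum]
    push_cast
    rfl
end

section
/- Let δ ∈ (0,1) and suppose a : (0,1) → (0, 1−δ] satisfies a(r) → a₁ ∈ (0, 1−δ] as r → 1⁻. Define c_1(r) = 2 ∑_{k=1}^∞ (−1)^{k+1} a(r)^k / (1 − r^k) and c_3(r) = (1/3) ∑_{k=1}^∞ k² (−1)^{k+1} a(r)^k / (1 − r^k). Then (1−r) c_1(r) → 2 log(1 + a₁) and (1−r) c_3(r) → (1/3) · a₁ / (1 + a₁)² as r → 1⁻. -/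
/-!
Since `(1 - r) / (1 - r ^ k)` lies in `[0, 1]` and tends to `1 / k` as `r → 1⁻`, dominated
convergence (with the geometric majorant `k ^ m (1 - δ) ^ k`) gives
`(1 - r) ∑ c_k a(r)^k / (1 - r^k) → ∑ c_k a₁^k / k`. For `c_k = (-1)^(k+1)` this is the series of
`log (1 + a₁)`, and for `c_k = k² (-1)^(k+1)` it is `∑ k (-a₁)^k` up to sign, i.e. `a₁ / (1 + a₁)²`.
-/

open Filter Topology

lemma tendsto_one_sub_div_one_sub_pow (n : ℕ) :
    Tendsto (fun r : ℝ => (1 - r) / (1 - r ^ (n + 1))) (𝓝[≠] 1) (𝓝 (1 / (n + 1))) := by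
  have hgeom : Tendsto (fun r : ℝ => ∑ i ∈ Finset.range (n + 1), r ^ i) (𝓝 1) (𝓝 (n + 1)) := by
    simpa using (continuous_finsetSum (Finset.range (n + 1)) fun i _ => continuous_pow i).tendsto (1 : ℝ)
  rw [one_div]
  refine ((hgeom.inv₀ (by positivity)).mono_left nhdsWithin_le_nhds).congr' ?_
  filter_upwards [self_mem_nhdsWithin] with r hr
  rw [geom_sum_eq hr, inv_div, ← neg_div_neg_eq, neg_sub, neg_sub]

lemma one_sub_div_one_sub_pow_mem_Icc {r : ℝ} (hr₀ : 0 ≤ r) (hr₁ : r < 1) (n : ℕ) :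
    (1 - r) / (1 - r ^ (n + 1)) ∈ Set.Icc 0 1 := by
  have hpow : r ^ (n + 1) ≤ r := pow_le_of_le_one hr₀ hr₁.le n.succ_ne_zero
  exact ⟨div_nonneg (by linarith) (by linarith), (div_le_one (by linarith)).2 (by linarith)⟩

theorem tendsto_one_sub_mul_tsum_div_one_sub_pow {c : ℕ → ℝ} {b : ℝ} {a : ℝ → ℝ} {a₁ : ℝ}
    (hc : Summable fun k => |c k| * b ^ (k + 1))
    (hab : ∀ᶠ r in 𝓝[Set.Ioo 0 1] 1, |a r| ≤ b)
    (ha : Tendsto a (𝓝[Set.Ioo 0 1] 1) (𝓝 a₁)) :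
    Tendsto (fun r => (1 - r) * ∑' k, c k * a r ^ (k + 1) / (1 - r ^ (k + 1)))
      (𝓝[Set.Ioo 0 1] 1) (𝓝 (∑' k, c k * a₁ ^ (k + 1) / (k + 1))) := by
  have hlim (k : ℕ) : Tendsto (fun r => c k * a r ^ (k + 1) * ((1 - r) / (1 - r ^ (k + 1))))
      (𝓝[Set.Ioo 0 1] 1) (𝓝 (c k * a₁ ^ (k + 1) / (k + 1))) := by
    rw [← mul_one_div]
    exact ((ha.pow _).const_mul _).mul <| (tendsto_one_sub_div_one_sub_pow k).mono_left <|
      nhdsWithin_mono _ fun r hr => hr.2.ne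
  have hbound : ∀ᶠ r in 𝓝[Set.Ioo 0 1] 1, ∀ k,
      ‖c k * a r ^ (k + 1) * ((1 - r) / (1 - r ^ (k + 1)))‖ ≤ |c k| * b ^ (k + 1) := by
    filter_upwards [hab, self_mem_nhdsWithin] with r hr hr01 k
    obtain ⟨hq₀, hq₁⟩ := one_sub_div_one_sub_pow_mem_Icc hr01.1.le hr01.2 k
    rw [Real.norm_eq_abs, abs_mul, abs_mul, abs_pow, abs_of_nonneg hq₀]
    calc |c k| * |a r| ^ (k + 1) * ((1 - r) / (1 - r ^ (k + 1)))
        ≤ |c k| * |a r| ^ (k + 1) := mul_le_of_le_one_right (by positivity) hq₁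
      _ ≤ |c k| * b ^ (k + 1) := by gcongr
  refine (tendsto_tsum_of_dominated_convergence hc hlim hbound).congr fun r => ?_
  rw [← tsum_mul_left]
  congr 1 with k
  ring

lemma summable_succ_pow_mul_pow_succ (m : ℕ) {b : ℝ} (hb : |b| < 1) :
    Summable fun k : ℕ => ((k : ℝ) + 1) ^ m * b ^ (k + 1) := by
  have h := (summable_nat_add_iff 1).2 (summable_pow_mul_geometric_of_norm_lt_one m (r := b) hb)
  simpa only [Nat.cast_add, Nat.cast_one] using h

lemma hasSum_log_one_add_of_abs_lt_one {x : ℝ} (hx : |x| < 1) :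
    HasSum (fun k : ℕ => (-1) ^ k * x ^ (k + 1) / (k + 1)) (Real.log (1 + x)) := by
  have h := (Real.hasSum_pow_div_log_of_abs_lt_one (x := -x) (by rwa [abs_neg])).neg
  rw [neg_neg, sub_neg_eq_add] at h
  refine h.congr_fun fun k => ?_
  rw [neg_pow, pow_succ]
  ring

lemma hasSum_alternating_succ_mul_pow_succ {x : ℝ} (hx : |x| < 1) :
    HasSum (fun k : ℕ => (k + 1) * (-1) ^ k * x ^ (k + 1)) (x / (1 + x) ^ 2) := by
  have h := (hasSum_nat_add_iff' 1).2
    (hasSum_coe_mul_geometric_of_norm_lt_one (r := -x) (by rwa [Real.norm_eq_abs, abs_neg]))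
  have hvalue : x / (1 + x) ^ 2 = -(-x / (1 - -x) ^ 2 - ∑ i ∈ Finset.range 1, i * (-x) ^ i) := by
    simp [neg_div]
  rw [hvalue]
  refine h.neg.congr_fun fun k => ?_
  push_cast
  rw [neg_pow]
  ring

theorem stmt_7 (δ : ℝ) (hδ : δ ∈ Set.Ioo (0:ℝ) 1) (a : ℝ → ℝ) (a₁ : ℝ)
    (ha : ∀ r ∈ Set.Ioo (0:ℝ) 1, a r ∈ Set.Ioc (0:ℝ) (1 - δ))
    (ha₁ : a₁ ∈ Set.Ioc (0:ℝ) (1 - δ))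
    (halim : Tendsto a (nhdsWithin 1 (Set.Ioo (0:ℝ) 1)) (nhds a₁)) :
    Tendsto (fun r : ℝ =>
        (1 - r) * (2 * ∑' k : ℕ, (-1 : ℝ) ^ k * (a r) ^ (k + 1) / (1 - r ^ (k + 1))))
      (nhdsWithin 1 (Set.Ioo (0:ℝ) 1)) (nhds (2 * Real.log (1 + a₁))) ∧
    Tendsto (fun r : ℝ =>
        (1 - r) * ((1/3 : ℝ) * ∑' k : ℕ,
          ((k + 1 : ℝ)) ^ 2 * (-1 : ℝ) ^ k * (a r) ^ (k + 1) / (1 - r ^ (k + 1))))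
      (nhdsWithin 1 (Set.Ioo (0:ℝ) 1)) (nhds ((1/3 : ℝ) * (a₁ / (1 + a₁) ^ 2))) := by
  have hb : |1 - δ| < 1 := abs_lt.2 ⟨by linarith [hδ.2], by linarith [hδ.1]⟩
  have ha₁_lt : |a₁| < 1 := by rw [abs_of_pos ha₁.1]; linarith [ha₁.2, hδ.1]
  have hab : ∀ᶠ r in 𝓝[Set.Ioo 0 1] 1, |a r| ≤ 1 - δ := by
    filter_upwards [self_mem_nhdsWithin] with r hr
    rw [abs_of_pos (ha r hr).1]
    exact (ha r hr).2
  constructor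
  · have hc : Summable fun k : ℕ => |(-1 : ℝ) ^ k| * (1 - δ) ^ (k + 1) := by
      simpa using summable_succ_pow_mul_pow_succ 0 hb
    rw [← (hasSum_log_one_add_of_abs_lt_one ha₁_lt).tsum_eq]
    refine ((tendsto_one_sub_mul_tsum_div_one_sub_pow hc hab halim).const_mul 2).congr
      fun r => ?_
    ring
  · have hc : Summable fun k : ℕ => |((k + 1 : ℝ)) ^ 2 * (-1 : ℝ) ^ k| * (1 - δ) ^ (k + 1) := by
      simpa [abs_mul] using summable_succ_pow_mul_pow_succ 2 hb
    have hsum : ∑' k : ℕ, ((k + 1 : ℝ)) ^ 2 * (-1 : ℝ) ^ k * a₁ ^ (k + 1) / (k + 1)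
        = a₁ / (1 + a₁) ^ 2 := by
      rw [← (hasSum_alternating_succ_mul_pow_succ ha₁_lt).tsum_eq]
      congr 1 with k
      field_simp
    rw [← hsum]
    refine ((tendsto_one_sub_mul_tsum_div_one_sub_pow hc hab halim).const_mul (1 / 3)).congr
      fun r => ?_
    ring
end

section
/- Fix τ ∈ ℝ \ {0}. For r ∈ (0,1) set a(r) = exp( (log r)(1/2 + (1/2)|⌊τ/(1−r)⌋|) ) and c_1(r) = 2 ∑_{k=1}^∞ (−1)^{k+1} a(r)^k / (1 − r^k). Then c_1(r) − 2 log(1 + e^{−|τ|/2})/(1−r) stays bounded as r → 1⁻ (the bound depending on τ). -/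
open Filter Real

/-!
Write `a = a(r)`. Replacing `1 - r ^ (k + 1)` by `(k + 1) (1 - r)` turns the series into the
logarithmic series `∑ (-1) ^ k a ^ (k + 1) / ((k + 1) (1 - r)) = log (1 + a) / (1 - r)`, at a cost
of at most `a ^ (k + 1) / r ^ k` in the `k`-th term. Since `⌊τ / (1 - r)⌋ (1 - r) → τ`, for `r`
near `1` we have `a / r ≤ exp (-|τ| / 4)`, so these errors sum to `O(1)`, and
`log a = -|τ| / 2 + O(1 - r)`. As `u ↦ log (1 + exp u)` is `1`-Lipschitz, this gives
`log (1 + a) / (1 - r) = log (1 + exp (-|τ| / 2)) / (1 - r) + O(1)`.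
-/

lemma one_sub_pow_le_mul_one_sub {r : ℝ} (hr : -1 ≤ r) (n : ℕ) : 1 - r ^ n ≤ n * (1 - r) := by
  have := one_add_mul_le_pow (a := r - 1) (by linarith) n
  rw [add_sub_cancel] at this
  linarith

lemma mul_pow_le_one_sub_pow {r : ℝ} (hr0 : 0 ≤ r) (hr1 : r ≤ 1) (n : ℕ) :
    (n + 1) * (1 - r) * r ^ n ≤ 1 - r ^ (n + 1) := by
  have hgeom : (n + 1 : ℝ) * r ^ n ≤ ∑ i ∈ Finset.range (n + 1), r ^ i := by
    calc (n + 1 : ℝ) * r ^ n = ∑ _i ∈ Finset.range (n + 1), r ^ n := by simp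
      _ ≤ _ := Finset.sum_le_sum fun i hi =>
          pow_le_pow_of_le_one hr0 hr1 (Nat.lt_succ_iff.mp (Finset.mem_range.mp hi))
  nlinarith [geom_sum_mul r (n + 1)]

lemma abs_one_div_one_sub_pow_sub_le {r : ℝ} (hr0 : 0 < r) (hr1 : r < 1) (n : ℕ) :
    |1 / (1 - r ^ (n + 1)) - 1 / ((n + 1) * (1 - r))| ≤ 1 / r ^ n := by
  have hD : 0 < 1 - r ^ (n + 1) := sub_pos.2 (pow_lt_one₀ hr0.le hr1 n.succ_ne_zero)
  have hE : 0 < (n + 1 : ℝ) * (1 - r) := by have := sub_pos.2 hr1; positivity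
  have hrn : 0 < r ^ n := pow_pos hr0 n
  have hDE : 1 - r ^ (n + 1) ≤ (n + 1) * (1 - r) := by
    exact_mod_cast one_sub_pow_le_mul_one_sub (by linarith) (n + 1)
  have hED := mul_pow_le_one_sub_pow hr0.le hr1.le n
  have hn := one_sub_pow_le_mul_one_sub (r := r) (by linarith) n
  rw [abs_of_nonneg (sub_nonneg.2 (one_div_le_one_div_of_le hD hDE)), div_sub_div _ _ hD.ne' hE.ne',
    div_le_div_iff₀ (mul_pos hD hE) hrn]
  nlinarith [mul_le_mul_of_nonneg_left hED hE.le, mul_le_mul_of_nonneg_right hn hE.le]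

lemma hasSum_alternating_pow_div_log_one_add {a : ℝ} (ha : |a| < 1) :
    HasSum (fun k : ℕ => (-1) ^ k * a ^ (k + 1) / (k + 1)) (log (1 + a)) := by
  have := (hasSum_pow_div_log_of_abs_lt_one (x := -a) (by rwa [abs_neg])).neg
  rw [neg_neg, sub_neg_eq_add] at this
  have hterm : (fun k : ℕ => -((-a) ^ (k + 1) / (k + 1))) =
      fun k : ℕ => (-1) ^ k * a ^ (k + 1) / (k + 1) := by
    ext k
    rw [neg_pow, pow_succ (-1 : ℝ) k]
    ring
  rwa [hterm] at this

lemma abs_tsum_alternating_sub_log_le {r a ρ : ℝ} (hr0 : 0 < r) (hr1 : r < 1) (ha : 0 < a)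
    (haρ : a ≤ r * ρ) (hρ : ρ < 1) :
    |∑' k : ℕ, (-1 : ℝ) ^ k * a ^ (k + 1) / (1 - r ^ (k + 1)) - log (1 + a) / (1 - r)|
      ≤ 1 / (1 - ρ) := by
  have hρ0 : 0 ≤ ρ := nonneg_of_mul_nonneg_right (ha.le.trans haρ) hr0
  have ha1 : a < 1 := by nlinarith
  set φ : ℕ → ℝ := fun k =>
    (-1) ^ k * a ^ (k + 1) * (1 / (1 - r ^ (k + 1)) - 1 / ((k + 1) * (1 - r)))
  have hq : a / r ≤ ρ := (div_le_iff₀' hr0).2 haρ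
  have hφ : ∀ k, ‖φ k‖ ≤ ρ ^ k := fun k =>
    calc ‖φ k‖ = a * (a ^ k * |1 / (1 - r ^ (k + 1)) - 1 / ((k + 1) * (1 - r))|) := by
          simp only [φ, norm_mul, norm_pow, norm_neg, norm_one, one_pow, one_mul, norm_eq_abs,
            abs_of_pos ha]
          ring
      _ ≤ 1 * (a ^ k * (1 / r ^ k)) := by
          gcongr
          exact abs_one_div_one_sub_pow_sub_le hr0 hr1 k
      _ ≤ ρ ^ k := by rw [one_mul, mul_one_div, ← div_pow]; gcongr
  have hlog := (hasSum_alternating_pow_div_log_one_add (abs_lt.2 ⟨by linarith, ha1⟩)).div_const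
    (1 - r)
  have hφsum : Summable φ :=
    .of_norm_bounded (summable_geometric_of_lt_one hρ0 hρ) hφ
  have hsplit : ∑' k : ℕ, (-1 : ℝ) ^ k * a ^ (k + 1) / (1 - r ^ (k + 1))
      = log (1 + a) / (1 - r) + ∑' k, φ k := by
    rw [← hlog.tsum_eq, ← hlog.summable.tsum_add hφsum]
    congr 1 with k
    have hD : 1 - r ^ (k + 1) ≠ 0 := (sub_pos.2 (pow_lt_one₀ hr0.le hr1 k.succ_ne_zero)).ne'
    have hs : 1 - r ≠ 0 := (sub_pos.2 hr1).ne'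
    simp only [φ]
    field_simp
    ring
  rw [hsplit, add_sub_cancel_left, one_div, ← Real.norm_eq_abs]
  exact tsum_of_norm_bounded (hasSum_geometric_of_lt_one hρ0 hρ) hφ

lemma log_one_add_exp_sub_le (u v : ℝ) : log (1 + exp u) - log (1 + exp v) ≤ |u - v| := by
  have hdom : 1 + exp u ≤ exp |u - v| * (1 + exp v) := by
    have h1 : 1 ≤ exp |u - v| := one_le_exp (abs_nonneg _)
    have h2 : exp u ≤ exp |u - v| * exp v := by
      rw [← exp_add]; exact exp_le_exp.2 (by linarith [le_abs_self (u - v)])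
    nlinarith [exp_pos v]
  have := log_le_log (by positivity) hdom
  rw [log_mul (exp_pos _).ne' (by positivity : 1 + exp v ≠ 0), log_exp] at this
  linarith

lemma abs_log_one_add_exp_sub_le (u v : ℝ) :
    |log (1 + exp u) - log (1 + exp v)| ≤ |u - v| :=
  abs_sub_le_iff.2 ⟨log_one_add_exp_sub_le u v, abs_sub_comm u v ▸ log_one_add_exp_sub_le v u⟩

lemma abs_abs_floor_sub_abs_le_one (x : ℝ) : |(|(⌊x⌋ : ℝ)| - |x|)| ≤ 1 :=
  (abs_abs_sub_abs_le_abs_sub _ _).trans <|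
    abs_le.2 ⟨by linarith [Int.lt_floor_add_one x], by linarith [Int.floor_le x]⟩

lemma log_mul_half_one_add_le {r m t : ℝ} (hr0 : 0 < r) (hr1 : r < 1)
    (hm : |m * (1 - r) - t| ≤ 1 - r) (ht : 1 - r ≤ t / 4) :
    log r * (1 / 2 + 1 / 2 * m) ≤ log r - t / 4 := by
  have hlog : log r ≤ -(1 - r) := by linarith [log_le_sub_one_of_pos hr0]
  have hms := (abs_le.1 hm).1
  have hm1 : 0 ≤ m - 1 := by
    by_contra! h
    nlinarith [mul_pos (sub_pos.2 hr1) (neg_pos.2 h)]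
  nlinarith [mul_le_mul_of_nonneg_right hlog hm1]

lemma abs_log_mul_half_one_add_sub_le {r m t : ℝ} (hr : 1 / 2 ≤ r) (hr1 : r < 1) (hm0 : 0 ≤ m)
    (hm : |m * (1 - r) - t| ≤ 1 - r) :
    |log r * (1 / 2 + 1 / 2 * m) - -t / 2| ≤ (t + 2) * (1 - r) := by
  have hr0 : 0 < r := by linarith
  obtain ⟨hms, hms'⟩ := abs_le.1 hm
  have hlog : log r ≤ -(1 - r) := by linarith [log_le_sub_one_of_pos hr0]
  have hlog' : -(1 - r) - 2 * (1 - r) ^ 2 ≤ log r := by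
    have h := one_sub_inv_le_log_of_pos hr0
    have : r * (1 - r⁻¹) = r - 1 := by field_simp
    nlinarith [mul_le_mul_of_nonneg_left h hr0.le]
  rw [abs_le]
  constructor
  · nlinarith [mul_le_mul_of_nonneg_right hlog' (by linarith : 0 ≤ 1 / 2 + 1 / 2 * m)]
  · nlinarith [mul_le_mul_of_nonneg_right hlog (by linarith : 0 ≤ 1 / 2 + 1 / 2 * m)]

lemma abs_two_mul_tsum_sub_le {τ r : ℝ} (hr : 1 / 2 ≤ r) (hr1 : r < 1) (hτr : 1 - r ≤ |τ| / 4) :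
    |(2 * ∑' k : ℕ, (-1 : ℝ) ^ k *
          (exp (log r * (1 / 2 + (1 / 2) * |(⌊τ / (1 - r)⌋ : ℝ)|))) ^ (k + 1) / (1 - r ^ (k + 1)))
        - 2 * log (1 + exp (-|τ| / 2)) / (1 - r)|
      ≤ 2 * (1 / (1 - exp (-|τ| / 4)) + |τ| + 2) := by
  have hr0 : 0 < r := by linarith
  have hs : 0 < 1 - r := sub_pos.2 hr1
  set m := |(⌊τ / (1 - r)⌋ : ℝ)|
  set a := exp (log r * (1 / 2 + 1 / 2 * m))
  have hm : |(m * (1 - r) - |τ|)| ≤ 1 - r := by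
    have h := abs_abs_floor_sub_abs_le_one (τ / (1 - r))
    rw [abs_div, abs_of_pos hs] at h
    have hfactor : m * (1 - r) - |τ| = (m - |τ| / (1 - r)) * (1 - r) := by field_simp
    rw [hfactor, abs_mul, abs_of_pos hs]
    exact mul_le_of_le_one_left hs.le h
  have ha : a ≤ r * exp (-|τ| / 4) :=
    calc a ≤ exp (log r - |τ| / 4) := exp_le_exp.2 (log_mul_half_one_add_le hr0 hr1 hm hτr)
      _ = r * exp (-|τ| / 4) := by rw [sub_eq_add_neg, exp_add, exp_log hr0, neg_div]
  have hL : |log (1 + a) - log (1 + exp (-|τ| / 2))| / (1 - r) ≤ |τ| + 2 :=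
    (div_le_iff₀ hs).2 <| (abs_log_one_add_exp_sub_le _ _).trans
      (abs_log_mul_half_one_add_sub_le hr hr1 (abs_nonneg _) hm)
  set S := ∑' k : ℕ, (-1 : ℝ) ^ k * a ^ (k + 1) / (1 - r ^ (k + 1))
  set L := log (1 + exp (-|τ| / 2))
  have hS : |S - log (1 + a) / (1 - r)| ≤ 1 / (1 - exp (-|τ| / 4)) :=
    abs_tsum_alternating_sub_log_le hr0 hr1 (exp_pos _) ha (exp_lt_one_iff.2 (by linarith))
  calc |2 * S - 2 * L / (1 - r)|
      = |2 * (S - log (1 + a) / (1 - r)) + 2 * ((log (1 + a) - L) / (1 - r))| := by ring_nf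
    _ ≤ 2 * |S - log (1 + a) / (1 - r)| + 2 * (|log (1 + a) - L| / (1 - r)) :=
      (abs_add_le _ _).trans_eq (by rw [abs_mul, abs_mul, abs_div, abs_two, abs_of_pos hs])
    _ ≤ 2 * (1 / (1 - exp (-|τ| / 4)) + |τ| + 2) := by linarith

theorem stmt_8 (τ : ℝ) (hτ : τ ≠ 0) :
    ∃ C : ℝ, ∀ᶠ r in nhdsWithin 1 (Set.Ioo (0:ℝ) 1),
      |(2 * ∑' k : ℕ, (-1 : ℝ) ^ k *
          (Real.exp (Real.log r * (1/2 + (1/2) * |(⌊τ / (1 - r)⌋ : ℝ)|))) ^ (k + 1)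
            / (1 - r ^ (k + 1)))
        - 2 * Real.log (1 + Real.exp (-|τ| / 2)) / (1 - r)| ≤ C := by
  refine ⟨2 * (1 / (1 - exp (-|τ| / 4)) + |τ| + 2), ?_⟩
  have hδ : 1 - min (1 / 2) (|τ| / 4) < 1 := by
    have := abs_pos.2 hτ
    linarith [lt_min (by norm_num : (0 : ℝ) < 1 / 2) (by positivity : 0 < |τ| / 4)]
  filter_upwards [self_mem_nhdsWithin, nhdsWithin_le_nhds (eventually_gt_nhds hδ)]
    with r hr hrδ
  exact abs_two_mul_tsum_sub_le (by linarith [min_le_left (1 / 2 : ℝ) (|τ| / 4)]) hr.2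
    (by linarith [min_le_right (1 / 2 : ℝ) (|τ| / 4)])
end

section
/- Let t ∈ (0,1), β ≥ 0, and suppose t is close enough to 1 that |β|(−log t) lies in the strip of analyticity of S_{a,r} (with a ∈ (0,1−δ], r ∈ (0,1)). For s ∈ ℝ set z(s) = (−log t)(β + i s). Then d/ds Re(S_{a,r}(z(s))) ≤ 0 for s ∈ [0, π(−log t)^{−1}] and d/ds Re(S_{a,r}(z(s))) ≥ 0 for s ∈ [−π(−log t)^{−1}, 0]. If instead β ≤ 0, both inequalities are reversed. -/
/-!
Write `z(s) = L (β + i s)` with `L = -log t > 0` and differentiate `Re S_{a,r}(z(s))` termwise.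
For `c = a r^j`, `w = c e^z` and `w' = c e^{-z}`, the identity `Im (w / (1 + w)) = Im w / |1 + w|²`
turns the derivative of the `j`-th term into
`-L c sin(Ls) (e^{Lβ} / |1 + w|² - e^{-Lβ} / |1 + w'|²)`.
After clearing denominators, the bracket becomes `(u - u⁻¹)(1 - c²) / (|1 + w|² |1 + w'|²)`
with `u = e^{Lβ}`, so it has the sign of `β`. Likewise `sin(Ls)` has the sign of `s`
on `[-π/L, π/L]`. Termwise differentiation is legitimate because `|w|, |w'| ≤ a e^{L|β|} r^j`
and `a e^{L|β|} ≤ (1 - δ) e^{Δ'} < 1`.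
-/

open Complex

noncomputable def logRatioSeries (a r : ℝ) (z : ℂ) : ℂ :=
  ∑' n : ℕ, (log (1 + (a * r ^ n : ℝ) * exp z) - log (1 + (a * r ^ n : ℝ) * exp (-z)))

noncomputable def derivLogRatio (c : ℝ) (z : ℂ) : ℂ :=
  c * exp z / (1 + c * exp z) + c * exp (-z) / (1 + c * exp (-z))

/-- With `u = e^{Re z}`, `θ = Im z`, this is
`u / (1 + 2 cos θ · cu + (cu)²) - u⁻¹ / (1 + 2 cos θ · cu⁻¹ + (cu⁻¹)²)`. -/
noncomputable def expWeightGap (c : ℝ) (z : ℂ) : ℝ :=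
  Real.exp z.re / normSq (1 + c * exp z) - Real.exp (-z.re) / normSq (1 + c * exp (-z))

lemma normSq_one_add_ofReal_mul_exp (c : ℝ) (z : ℂ) :
    normSq (1 + c * exp z)
      = 1 + 2 * Real.cos z.im * (c * Real.exp z.re) + (c * Real.exp z.re) ^ 2 := by
  rw [normSq_apply]
  simp only [add_re, add_im, one_re, one_im, re_ofReal_mul, im_ofReal_mul, exp_re, exp_im]
  linear_combination (c * Real.exp z.re) ^ 2 * Real.sin_sq_add_cos_sq z.im

lemma im_div_one_add (w : ℂ) : (w / (1 + w)).im = w.im / normSq (1 + w) := by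
  simp only [div_im, add_re, add_im, one_re, one_im]
  ring

lemma norm_div_one_add_le {w : ℂ} {h : ℝ} (hw : ‖w‖ ≤ h) (h1 : h < 1) :
    ‖w / (1 + w)‖ ≤ ‖w‖ / (1 - h) := by
  have hle : 1 - h ≤ ‖1 + w‖ := by
    have := norm_sub_norm_le (1 : ℂ) (-w)
    rw [norm_one, norm_neg, sub_neg_eq_add] at this
    linarith
  rw [norm_div]
  exact div_le_div_of_nonneg_left (norm_nonneg w) (by linarith) hle

lemma norm_ofReal_mul_exp_le {c : ℝ} (hc : 0 ≤ c) (z : ℂ) :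
    ‖(c : ℂ) * exp z‖ ≤ c * Real.exp |z.re| := by
  rw [norm_mul, norm_exp, norm_real, Real.norm_of_nonneg hc]
  gcongr
  exact le_abs_self _

lemma norm_ofReal_mul_exp_neg_le {c : ℝ} (hc : 0 ≤ c) (z : ℂ) :
    ‖(c : ℂ) * exp (-z)‖ ≤ c * Real.exp |z.re| := by
  simpa using norm_ofReal_mul_exp_le hc (-z)

lemma one_add_two_mul_cos_mul_add_sq_pos {v : ℝ} (θ : ℝ) (hv0 : 0 ≤ v) (hv1 : v < 1) :
    0 < 1 + 2 * Real.cos θ * v + v ^ 2 := by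
  nlinarith [Real.neg_one_le_cos θ]

lemma inv_div_le_div_of_one_le {b u : ℝ} (θ : ℝ) (hb : 0 ≤ b) (hu : 1 ≤ u)
    (hbu : b * u < 1) :
    u⁻¹ / (1 + 2 * Real.cos θ * (b * u⁻¹) + (b * u⁻¹) ^ 2)
      ≤ u / (1 + 2 * Real.cos θ * (b * u) + (b * u) ^ 2) := by
  have hu0 : 0 < u := by linarith
  have hinv : u⁻¹ ≤ u := (inv_le_one_of_one_le₀ hu).trans hu
  have hb1 : b ^ 2 ≤ 1 := by nlinarith
  have hbinv : b * u⁻¹ < 1 := (mul_le_mul_of_nonneg_left hinv hb).trans_lt hbu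
  rw [div_le_div_iff₀ (one_add_two_mul_cos_mul_add_sq_pos θ (by positivity) hbinv)
    (one_add_two_mul_cos_mul_add_sq_pos θ (by positivity) hbu)]
  have key : u * (1 + 2 * Real.cos θ * (b * u⁻¹) + (b * u⁻¹) ^ 2)
      - u⁻¹ * (1 + 2 * Real.cos θ * (b * u) + (b * u) ^ 2) = (u - u⁻¹) * (1 - b ^ 2) := by
    field_simp
    ring
  linarith [mul_nonneg (sub_nonneg.mpr hinv) (sub_nonneg.mpr hb1)]

lemma expWeightGap_nonneg {c : ℝ} {z : ℂ} (hc : 0 ≤ c) (hz : 0 ≤ z.re)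
    (hcz : c * Real.exp z.re < 1) : 0 ≤ expWeightGap c z := by
  rw [expWeightGap, sub_nonneg, normSq_one_add_ofReal_mul_exp, normSq_one_add_ofReal_mul_exp,
    neg_re, neg_im, Real.cos_neg, Real.exp_neg]
  exact inv_div_le_div_of_one_le _ hc (Real.one_le_exp hz) hcz

lemma expWeightGap_neg (c : ℝ) (z : ℂ) : expWeightGap c (-z) = -expWeightGap c z := by
  simp only [expWeightGap, neg_neg, neg_re]
  ring

lemma expWeightGap_nonpos {c : ℝ} {z : ℂ} (hc : 0 ≤ c) (hz : z.re ≤ 0)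
    (hcz : c * Real.exp (-z.re) < 1) : expWeightGap c z ≤ 0 := by
  have := expWeightGap_nonneg (z := -z) hc (by simpa using hz) (by simpa using hcz)
  rwa [expWeightGap_neg, neg_nonneg] at this

lemma re_mul_I_derivLogRatio (c L : ℝ) (z : ℂ) :
    (L * I * derivLogRatio c z).re = -(L * Real.sin z.im * (c * expWeightGap c z)) := by
  simp only [derivLogRatio, mul_re, ofReal_re, ofReal_im, I_re, I_im, add_im, im_div_one_add,
    im_ofReal_mul, exp_im, neg_re, neg_im, Real.sin_neg, expWeightGap]
  ring

lemma norm_derivLogRatio_le {c h : ℝ} {z : ℂ} (hc : 0 ≤ c) (hch : c * Real.exp |z.re| ≤ h)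
    (h1 : h < 1) : ‖derivLogRatio c z‖ ≤ 2 * (c * Real.exp |z.re|) / (1 - h) := by
  have hw := (norm_ofReal_mul_exp_le hc z).trans hch
  have hw' := (norm_ofReal_mul_exp_neg_le hc z).trans hch
  calc ‖derivLogRatio c z‖ ≤ _ := norm_add_le _ _
    _ ≤ _ := add_le_add (norm_div_one_add_le hw h1) (norm_div_one_add_le hw' h1)
    _ ≤ _ := by
      rw [← add_div, two_mul]
      gcongr
      exacts [norm_ofReal_mul_exp_le hc z, norm_ofReal_mul_exp_neg_le hc z]

lemma hasDerivAt_log_one_add_mul_exp {f : ℝ → ℂ} {f' c : ℂ} {s : ℝ}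
    (hf : HasDerivAt f f' s) (hc : ‖c * exp (f s)‖ < 1) :
    HasDerivAt (fun s => log (1 + c * exp (f s)))
      (c * exp (f s) / (1 + c * exp (f s)) * f') s := by
  convert ((hf.cexp.const_mul c).const_add 1).clog_real (mem_slitPlane_of_norm_lt_one hc) using 1
  ring

lemma hasDerivAt_log_ratio {f : ℝ → ℂ} {f' : ℂ} {c s : ℝ} (hf : HasDerivAt f f' s)
    (hc : 0 ≤ c) (hcf : c * Real.exp |(f s).re| < 1) :
    HasDerivAt (fun s => log (1 + c * exp (f s)) - log (1 + c * exp (-f s)))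
      (f' * derivLogRatio c (f s)) s := by
  have hf' : HasDerivAt (fun s => -f s) (-f') s := hf.neg
  refine ((hasDerivAt_log_one_add_mul_exp hf ((norm_ofReal_mul_exp_le hc _).trans_lt hcf)).sub
    (hasDerivAt_log_one_add_mul_exp hf'
      ((norm_ofReal_mul_exp_neg_le hc _).trans_lt hcf))).congr_deriv ?_
  rw [derivLogRatio]
  ring

lemma summable_log_ratio {a r : ℝ} (hr0 : 0 ≤ r) (hr1 : r < 1) (z : ℂ) :
    Summable fun n : ℕ =>
      log (1 + (a * r ^ n : ℝ) * exp z) - log (1 + (a * r ^ n : ℝ) * exp (-z)) := by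
  have hcoef : Summable fun n : ℕ => ((a * r ^ n : ℝ) : ℂ) :=
    summable_ofReal.mpr ((summable_geometric_of_lt_one hr0 hr1).mul_left a)
  exact (summable_log_one_add_of_summable (hcoef.mul_right _)).sub
    (summable_log_one_add_of_summable (hcoef.mul_right _))

lemma mul_pow_le_self {a r : ℝ} (ha : 0 ≤ a) (hr0 : 0 ≤ r) (hr1 : r ≤ 1) (n : ℕ) :
    a * r ^ n ≤ a :=
  mul_le_of_le_one_right ha (pow_le_one₀ hr0 hr1)

section Line

variable {L β : ℝ}

lemma hasDerivAt_line (s : ℝ) :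
    HasDerivAt (fun s : ℝ => (L : ℂ) * (β + s * I)) (L * I) s := by
  simpa using
    ((((hasDerivAt_id (s : ℂ)).comp_ofReal).mul_const I).const_add (β : ℂ)).const_mul (L : ℂ)

lemma re_line (s : ℝ) : ((L : ℂ) * (β + s * I)).re = L * β := by simp

lemma im_line (s : ℝ) : ((L : ℂ) * (β + s * I)).im = L * s := by simp

theorem hasDerivAt_re_logRatioSeries {a r : ℝ} (ha : 0 ≤ a) (hr0 : 0 ≤ r) (hr1 : r < 1)
    (haβ : a * Real.exp |L * β| < 1) (s : ℝ) :
    HasDerivAt (fun s : ℝ => (logRatioSeries a r (L * (β + s * I))).re)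
      (-(L * Real.sin (L * s) *
        ∑' n : ℕ, a * r ^ n * expWeightGap (a * r ^ n) (L * (β + s * I)))) s := by
  set M := Real.exp |L * β|
  have hc (n : ℕ) : 0 ≤ a * r ^ n := by positivity
  have hcM (n : ℕ) : a * r ^ n * M ≤ a * M := by
    gcongr
    exact mul_pow_le_self ha hr0 hr1.le n
  have hgeom : Summable fun n : ℕ => |L| * (2 * (a * r ^ n * M) / (1 - a * M)) := by
    refine ((summable_geometric_of_lt_one hr0 hr1).mul_left
      (|L| * (2 * a * M / (1 - a * M)))).congr fun n => ?_
    ring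
  have hbound (n : ℕ) (y : ℝ) :
      ‖(L : ℂ) * I * derivLogRatio (a * r ^ n) (L * (β + y * I))‖
        ≤ |L| * (2 * (a * r ^ n * M) / (1 - a * M)) := by
    have := norm_derivLogRatio_le (z := L * (β + y * I)) (hc n) (by rw [re_line]; exact hcM n) haβ
    rw [re_line] at this
    rw [norm_mul, norm_mul, norm_real, norm_I, mul_one, Real.norm_eq_abs]
    exact mul_le_mul_of_nonneg_left this (abs_nonneg L)
  have hderiv := hasDerivAt_tsum hgeom
    (fun n y => hasDerivAt_log_ratio (hasDerivAt_line y) (hc n)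
      (by rw [re_line]; exact (hcM n).trans_lt haβ))
    hbound (summable_log_ratio (a := a) hr0 hr1 (L * (β + (0 : ℝ) * I))) s
  have hre := reCLM.hasFDerivAt.comp_hasDerivAt s hderiv
  rw [reCLM_apply, re_tsum (.of_norm_bounded hgeom (hbound · s))] at hre
  simp only [re_mul_I_derivLogRatio, im_line, tsum_neg, tsum_mul_left] at hre
  exact hre

end Line

section Signs

variable {a r : ℝ} {z : ℂ}

lemma tsum_mul_expWeightGap_nonneg (ha : 0 ≤ a) (hr0 : 0 ≤ r) (hr1 : r ≤ 1) (hz : 0 ≤ z.re)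
    (haz : a * Real.exp |z.re| < 1) :
    0 ≤ ∑' n : ℕ, a * r ^ n * expWeightGap (a * r ^ n) z :=
  tsum_nonneg fun n => mul_nonneg (by positivity) <| expWeightGap_nonneg (by positivity) hz <|
    (mul_le_mul (mul_pow_le_self ha hr0 hr1 n) (by gcongr; exact le_abs_self _) (by positivity)
      ha).trans_lt haz

lemma tsum_mul_expWeightGap_nonpos (ha : 0 ≤ a) (hr0 : 0 ≤ r) (hr1 : r ≤ 1) (hz : z.re ≤ 0)
    (haz : a * Real.exp |z.re| < 1) :
    ∑' n : ℕ, a * r ^ n * expWeightGap (a * r ^ n) z ≤ 0 :=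
  tsum_nonpos fun n => mul_nonpos_of_nonneg_of_nonpos (by positivity) <|
    expWeightGap_nonpos (by positivity) hz <|
    (mul_le_mul (mul_pow_le_self ha hr0 hr1 n) (by gcongr; exact neg_le_abs _) (by positivity)
      ha).trans_lt haz

end Signs

lemma sin_mul_nonneg_of_mem_Icc {L s : ℝ} (hL : 0 < L) (hs : s ∈ Set.Icc 0 (Real.pi * L⁻¹)) :
    0 ≤ Real.sin (L * s) := by
  refine Real.sin_nonneg_of_nonneg_of_le_pi (mul_nonneg hL.le hs.1) ?_
  calc L * s ≤ L * (Real.pi * L⁻¹) := mul_le_mul_of_nonneg_left hs.2 hL.le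
    _ = Real.pi := by field_simp

lemma sin_mul_nonpos_of_mem_Icc {L s : ℝ} (hL : 0 < L)
    (hs : s ∈ Set.Icc (-(Real.pi * L⁻¹)) 0) : Real.sin (L * s) ≤ 0 := by
  have := sin_mul_nonneg_of_mem_Icc hL (s := -s) ⟨neg_nonneg.mpr hs.2, neg_le.mp hs.1⟩
  rwa [mul_neg, Real.sin_neg, neg_nonneg] at this

theorem stmt_11_general (δ r a Δ' t β : ℝ)
    (hr : r ∈ Set.Ioo (0:ℝ) 1)
    (ha : a ∈ Set.Ioc (0:ℝ) (1 - δ))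
    (hΔ : (1 - δ) * Real.exp Δ' < 1)
    (ht : t ∈ Set.Ioo (0:ℝ) 1)
    (hβ : |β| * (-Real.log t) < Δ')
    (S : ℂ → ℂ)
    (hS : ∀ z : ℂ, S z = ∑' j : ℕ,
      (Complex.log (1 + (a : ℂ) * (r : ℂ) ^ j * Complex.exp z)
        - Complex.log (1 + (a : ℂ) * (r : ℂ) ^ j * Complex.exp (-z)))) :
    (0 ≤ β →
      (∀ s ∈ Set.Icc (0:ℝ) (Real.pi * (-Real.log t)⁻¹),
        deriv (fun s' : ℝ =>
          (S (((-Real.log t : ℝ) : ℂ) * ((β : ℂ) + (s' : ℂ) * Complex.I))).re) s ≤ 0) ∧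
      (∀ s ∈ Set.Icc (-(Real.pi * (-Real.log t)⁻¹)) (0:ℝ),
        0 ≤ deriv (fun s' : ℝ =>
          (S (((-Real.log t : ℝ) : ℂ) * ((β : ℂ) + (s' : ℂ) * Complex.I))).re) s)) ∧
    (β ≤ 0 →
      (∀ s ∈ Set.Icc (0:ℝ) (Real.pi * (-Real.log t)⁻¹),
        0 ≤ deriv (fun s' : ℝ =>
          (S (((-Real.log t : ℝ) : ℂ) * ((β : ℂ) + (s' : ℂ) * Complex.I))).re) s) ∧
      (∀ s ∈ Set.Icc (-(Real.pi * (-Real.log t)⁻¹)) (0:ℝ),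
        deriv (fun s' : ℝ =>
          (S (((-Real.log t : ℝ) : ℂ) * ((β : ℂ) + (s' : ℂ) * Complex.I))).re) s ≤ 0)) := by
  set L := -Real.log t
  have hL : 0 < L := neg_pos.mpr (Real.log_neg ht.1 ht.2)
  have haβ : a * Real.exp |L * β| < 1 := by
    rw [abs_mul, abs_of_pos hL, mul_comm L]
    refine lt_of_le_of_lt ?_ hΔ
    exact mul_le_mul ha.2 (Real.exp_le_exp.mpr hβ.le) (Real.exp_pos _).le (ha.1.le.trans ha.2)
  obtain rfl : S = logRatioSeries a r := funext fun z => by rw [hS, logRatioSeries]; push_cast; rfl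
  have hderiv (s : ℝ) := (hasDerivAt_re_logRatioSeries ha.1.le hr.1.le hr.2 haβ s).deriv
  have hG_nonneg (hβ0 : 0 ≤ β) (s : ℝ) := tsum_mul_expWeightGap_nonneg
    (z := L * (β + s * I)) ha.1.le hr.1.le hr.2.le (by rw [re_line]; positivity) (by rwa [re_line])
  have hG_nonpos (hβ0 : β ≤ 0) (s : ℝ) := tsum_mul_expWeightGap_nonpos
    (z := L * (β + s * I)) ha.1.le hr.1.le hr.2.le
    (by rw [re_line]; exact mul_nonpos_of_nonneg_of_nonpos hL.le hβ0) (by rwa [re_line])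
  refine ⟨fun hβ0 => ⟨fun s hs => ?_, fun s hs => ?_⟩,
    fun hβ0 => ⟨fun s hs => ?_, fun s hs => ?_⟩⟩
    <;> simp only [hderiv s, neg_nonpos, neg_nonneg]
  · exact mul_nonneg (mul_nonneg hL.le (sin_mul_nonneg_of_mem_Icc hL hs)) (hG_nonneg hβ0 s)
  · exact mul_nonpos_of_nonpos_of_nonneg (mul_nonpos_of_nonneg_of_nonpos hL.le
      (sin_mul_nonpos_of_mem_Icc hL hs)) (hG_nonneg hβ0 s)
  · exact mul_nonpos_of_nonneg_of_nonpos (mul_nonneg hL.le (sin_mul_nonneg_of_mem_Icc hL hs))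
      (hG_nonpos hβ0 s)
  · exact mul_nonneg_of_nonpos_of_nonpos (mul_nonpos_of_nonneg_of_nonpos hL.le
      (sin_mul_nonpos_of_mem_Icc hL hs)) (hG_nonpos hβ0 s)

theorem stmt_11 (δ r a Δ' t β : ℝ)
    (hδ : δ ∈ Set.Ioo (0:ℝ) 1) (hr : r ∈ Set.Ioo (0:ℝ) 1)
    (ha : a ∈ Set.Ioc (0:ℝ) (1 - δ)) (hΔpos : 0 < Δ')
    (hΔ : (1 - δ) * Real.exp Δ' < 1)
    (ht : t ∈ Set.Ioo (0:ℝ) 1)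
    (hβ : |β| * (-Real.log t) < Δ')
    (S : ℂ → ℂ)
    (hS : ∀ z : ℂ, S z = ∑' j : ℕ,
      (Complex.log (1 + (a : ℂ) * (r : ℂ) ^ j * Complex.exp z)
        - Complex.log (1 + (a : ℂ) * (r : ℂ) ^ j * Complex.exp (-z)))) :
    (0 ≤ β →
      (∀ s ∈ Set.Icc (0:ℝ) (Real.pi * (-Real.log t)⁻¹),
        deriv (fun s' : ℝ =>
          (S (((-Real.log t : ℝ) : ℂ) * ((β : ℂ) + (s' : ℂ) * Complex.I))).re) s ≤ 0) ∧
      (∀ s ∈ Set.Icc (-(Real.pi * (-Real.log t)⁻¹)) (0:ℝ),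
        0 ≤ deriv (fun s' : ℝ =>
          (S (((-Real.log t : ℝ) : ℂ) * ((β : ℂ) + (s' : ℂ) * Complex.I))).re) s)) ∧
    (β ≤ 0 →
      (∀ s ∈ Set.Icc (0:ℝ) (Real.pi * (-Real.log t)⁻¹),
        0 ≤ deriv (fun s' : ℝ =>
          (S (((-Real.log t : ℝ) : ℂ) * ((β : ℂ) + (s' : ℂ) * Complex.I))).re) s) ∧
      (∀ s ∈ Set.Icc (-(Real.pi * (-Real.log t)⁻¹)) (0:ℝ),
        deriv (fun s' : ℝ =>
          (S (((-Real.log t : ℝ) : ℂ) * ((β : ℂ) + (s' : ℂ) * Complex.I))).re) s ≤ 0)) :=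
  stmt_11_general δ r a Δ' t β hr ha hΔ ht hβ S hS
end

section
/- Let σ > 0, and let z = x + ip, w = y + iq with x − y > 0. Then |1/sin(−πσ(x − y + i(p − q)))| ≤ 2 e^{−πσ|p−q|} / |sin(2πσ(x − y))|. Consequently, if moreover x − y ∈ [u, 2U] with 0 < u < U and 2U ≤ σ^{−1}/5, then this quantity is at most e^{−πσ|p−q|}/(σ u), and ∑_{k∈ℤ} |1/sin(−πσ(x − y + i(p + 2πk − q)))| ≤ (2/(σu)) ∑_{k≥0} e^{−2kπ²σ}, which is finite. -/
/-!
For `z = A + iB` one has `|sin z|² = sin² A cosh² B + cos² A sinh² B`, and since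
`sin² A + cos² A = 1` this exceeds `(sin A cos A · e^{|B|})²` by the square
`(sin² A cosh B - cos² A |sinh B|)²`; hence `|sin 2A| / |sin z| ≤ 2 e^{-|B|}`.
When `0 < u ≤ x - y` and `σ (x - y) ≤ 1/4`, Jordan's inequality `sin t ≥ 2t/π` on `[0, π/2]`
bounds `|sin 2A|` below by `4σu`. For the sum over `k`, shifting `k` moves `p - q` into
`[0, 2π)`, after which the terms `e^{-πσ|p - q + 2πk|}` are dominated by the geometric series
`e^{-2π²σn}` once for `k = n ≥ 0` and once for `k = -(n + 1)`.
-/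

open Real
open Complex (I)

theorem abs_sin_mul_cos_mul_exp_abs_im_le_norm_sin (z : ℂ) :
    |sin z.re * cos z.re| * exp |z.im| ≤ ‖Complex.sin z‖ := by
  have hsin : Complex.sin z = ((sin z.re * cosh z.im : ℝ) : ℂ) +
      ((cos z.re * sinh z.im : ℝ) : ℂ) * I := by
    conv_lhs => rw [← Complex.re_add_im z]
    rw [Complex.sin_add_mul_I]
    push_cast
    ring
  have hexp : exp |z.im| = cosh z.im + |sinh z.im| := by
    rw [abs_sinh, ← cosh_abs, cosh_add_sinh]
  rw [hsin, Complex.norm_add_mul_I, le_sqrt (by positivity) (by positivity), hexp]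
  have hdiff : (sin z.re * cosh z.im) ^ 2 + (cos z.re * sinh z.im) ^ 2 -
      (|sin z.re * cos z.re| * (cosh z.im + |sinh z.im|)) ^ 2 =
      (sin z.re ^ 2 * cosh z.im - cos z.re ^ 2 * |sinh z.im|) ^ 2 := by
    linear_combination (-(cosh z.im + |sinh z.im|) ^ 2) * sq_abs (sin z.re * cos z.re) +
      cos z.re ^ 2 * (sq_abs (sinh z.im)).symm -
      (sin z.re ^ 2 * cosh z.im ^ 2 + cos z.re ^ 2 * |sinh z.im| ^ 2) * sin_sq_add_cos_sq z.re
  rw [← sub_nonneg, hdiff]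
  exact sq_nonneg _

theorem abs_sin_two_mul_re_mul_norm_one_div_sin_le (z : ℂ) :
    |sin (2 * z.re)| * ‖1 / Complex.sin z‖ ≤ 2 * exp (-|z.im|) := by
  rw [norm_div, norm_one, mul_one_div]
  rcases (norm_nonneg (Complex.sin z)).eq_or_lt with h0 | hpos
  · rw [← h0, div_zero]
    positivity
  rw [div_le_iff₀ hpos, sin_two_mul, mul_assoc, abs_mul, abs_two, exp_neg, mul_assoc]
  gcongr
  rw [← div_eq_inv_mul, le_div_iff₀ (exp_pos _)]
  exact abs_sin_mul_cos_mul_exp_abs_im_le_norm_sin z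

theorem norm_one_div_sin_le_of_abs_re_le (z : ℂ) {a : ℝ} (ha : 0 < a) (hre : a ≤ |z.re|)
    (hre' : |z.re| ≤ π / 4) :
    ‖1 / Complex.sin z‖ ≤ π * exp (-|z.im|) / (2 * a) := by
  have hjordan : 2 / π * |2 * z.re| ≤ |sin (2 * z.re)| :=
    mul_abs_le_abs_sin (by rw [abs_mul, abs_two]; linarith)
  have hsin : 4 * a / π ≤ |sin (2 * z.re)| := by
    refine le_trans ?_ hjordan
    rw [abs_mul, abs_two, div_mul_eq_mul_div, div_le_div_iff_of_pos_right pi_pos]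
    linarith
  have := (mul_le_mul_of_nonneg_right hsin (norm_nonneg _)).trans
    (abs_sin_two_mul_re_mul_norm_one_div_sin_le z)
  rw [div_mul_eq_mul_div, div_le_iff₀ pi_pos] at this
  rw [le_div_iff₀ (by positivity)]
  linarith

section
variable {c h : ℝ}

theorem exp_neg_mul_abs_add_mul_le_int_rec (hc : 0 ≤ c) {b : ℝ} (hb : 0 ≤ b) (hbh : b ≤ h) :
    ∀ k : ℤ, exp (-(c * |b + h * k|)) ≤
      Int.rec (fun n : ℕ => exp (-(c * h * n))) (fun n : ℕ => exp (-(c * h * n))) k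
  | Int.ofNat n => by
    have : h * n ≤ |b + h * n| := by
      have : 0 ≤ h * n := mul_nonneg (hb.trans hbh) n.cast_nonneg
      rw [abs_of_nonneg (by linarith)]
      linarith
    simpa [mul_assoc] using mul_le_mul_of_nonneg_left this hc
  | Int.negSucc n => by
    have : h * n ≤ |b + h * Int.negSucc n| := by
      rw [Int.cast_negSucc, abs_of_nonpos (by push_cast; nlinarith)]
      push_cast
      linarith
    simpa [mul_assoc] using mul_le_mul_of_nonneg_left this hc

theorem exists_le_hasSum_exp_neg_mul_abs_add_mul (hc : 0 < c) (hh : 0 < h) (b : ℝ) :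
    ∃ g : ℤ → ℝ, (∀ k : ℤ, exp (-(c * |b + h * k|)) ≤ g k) ∧
      HasSum g (2 * ∑' n : ℕ, exp (-(c * h * n))) := by
  have hf : Summable fun n : ℕ => exp (-(c * h * n)) :=
    (summable_exp_nat_mul_iff.mpr (neg_neg_of_pos (mul_pos hc hh))).congr fun n => by ring_nf
  -- reduce to `b ∈ [0, h)` by shifting the index by `m = ⌊b / h⌋`
  set m := ⌊b / h⌋
  have hb0 : 0 ≤ b - h * m := by
    have := Int.fract_nonneg (b / h)
    rw [Int.fract, sub_nonneg, le_div_iff₀ hh] at this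
    linarith
  have hbh : b - h * m ≤ h := by
    have := (Int.fract_lt_one (b / h)).le
    rw [Int.fract, sub_le_iff_le_add, div_le_iff₀ hh] at this
    linarith
  refine ⟨fun k => Int.rec (fun n : ℕ => exp (-(c * h * n))) (fun n : ℕ => exp (-(c * h * n)))
    (k + m), fun k => ?_, ?_⟩
  · have hshift : b + h * k = b - h * m + h * ((k + m : ℤ) : ℝ) := by push_cast; ring
    rw [hshift]
    exact exp_neg_mul_abs_add_mul_le_int_rec hc.le hb0 hbh (k + m)
  · rw [two_mul]
    exact (Equiv.addRight m).hasSum_iff.mpr (hf.hasSum.int_rec hf.hasSum)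

end

theorem re_ofReal_mul_add_mul_I (a d b : ℝ) : ((a : ℂ) * ((d : ℂ) + (b : ℂ) * I)).re = a * d := by
  simp

theorem im_ofReal_mul_add_mul_I (a d b : ℝ) : ((a : ℂ) * ((d : ℂ) + (b : ℂ) * I)).im = a * b := by
  simp

theorem abs_neg_mul_of_nonneg {a : ℝ} (ha : 0 ≤ a) (t : ℝ) : |-a * t| = a * |t| := by
  rw [abs_mul, abs_neg, abs_of_nonneg ha]

section
variable {σ d : ℝ}

theorem abs_sin_mul_norm_one_div_sin_neg_mul_le (hσ : 0 ≤ σ) (b : ℝ) :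
    |sin (2 * π * σ * d)| * ‖1 / Complex.sin (((-(π * σ) : ℝ) : ℂ) * ((d : ℂ) + (b : ℂ) * I))‖
      ≤ 2 * exp (-(π * σ * |b|)) := by
  have := abs_sin_two_mul_re_mul_norm_one_div_sin_le
    (((-(π * σ) : ℝ) : ℂ) * ((d : ℂ) + (b : ℂ) * I))
  rwa [re_ofReal_mul_add_mul_I, im_ofReal_mul_add_mul_I, abs_neg_mul_of_nonneg (by positivity),
    show 2 * (-(π * σ) * d) = -(2 * π * σ * d) by ring, sin_neg, abs_neg] at this

theorem norm_one_div_sin_neg_mul_le {u : ℝ} (hσ : 0 < σ) (hu : 0 < u) (hud : u ≤ d)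
    (hd : σ * d ≤ 1 / 4) (b : ℝ) :
    ‖1 / Complex.sin (((-(π * σ) : ℝ) : ℂ) * ((d : ℂ) + (b : ℂ) * I))‖
      ≤ exp (-(π * σ * |b|)) / (σ * u) := by
  have hπσ : 0 ≤ π * σ := by positivity
  have hdu : |d| = d := abs_of_pos (hu.trans_le hud)
  have := norm_one_div_sin_le_of_abs_re_le (((-(π * σ) : ℝ) : ℂ) * ((d : ℂ) + (b : ℂ) * I))
    (a := π * σ * u) (by positivity)
    (by rw [re_ofReal_mul_add_mul_I, abs_neg_mul_of_nonneg hπσ, hdu]; gcongr)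
    (by rw [re_ofReal_mul_add_mul_I, abs_neg_mul_of_nonneg hπσ, hdu]; nlinarith [pi_pos])
  refine this.trans ?_
  rw [im_ofReal_mul_add_mul_I, abs_neg_mul_of_nonneg hπσ,
    div_le_div_iff₀ (by positivity) (by positivity)]
  nlinarith [mul_pos (mul_pos pi_pos (exp_pos (-(π * σ * |b|)))) (mul_pos hσ hu)]

end

theorem stmt_14_general (σ x y p q u U : ℝ) (hσ : 0 < σ) :
    |Real.sin (2 * Real.pi * σ * (x - y))| *
        ‖(1 / Complex.sin (((-(Real.pi * σ) : ℝ) : ℂ) *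
          (((x - y : ℝ) : ℂ) + ((p - q : ℝ) : ℂ) * Complex.I)))‖
      ≤ 2 * Real.exp (-(Real.pi * σ * |p - q|)) ∧
    (0 < u → u < U → 2 * U ≤ σ⁻¹ / 5 → x - y ∈ Set.Icc u (2 * U) →
      ‖(1 / Complex.sin (((-(Real.pi * σ) : ℝ) : ℂ) *
          (((x - y : ℝ) : ℂ) + ((p - q : ℝ) : ℂ) * Complex.I)))‖
        ≤ Real.exp (-(Real.pi * σ * |p - q|)) / (σ * u) ∧
      Summable (fun k : ℤ => ‖(1 / Complex.sin (((-(Real.pi * σ) : ℝ) : ℂ) *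
          (((x - y : ℝ) : ℂ) + ((p + 2 * Real.pi * (k : ℝ) - q : ℝ) : ℂ) * Complex.I)))‖) ∧
      ∑' k : ℤ, ‖(1 / Complex.sin (((-(Real.pi * σ) : ℝ) : ℂ) *
          (((x - y : ℝ) : ℂ) + ((p + 2 * Real.pi * (k : ℝ) - q : ℝ) : ℂ) * Complex.I)))‖
        ≤ (2 / (σ * u)) * ∑' k : ℕ, Real.exp (-(2 * (k : ℝ) * Real.pi ^ 2 * σ))) := by
  refine ⟨abs_sin_mul_norm_one_div_sin_neg_mul_le hσ.le _, fun hu _ hU ⟨hud, hdU⟩ => ?_⟩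
  have hd : σ * (x - y) ≤ 1 / 4 := by
    have := mul_le_mul_of_nonneg_left (hdU.trans hU) hσ.le
    rw [mul_div_assoc', mul_inv_cancel₀ hσ.ne'] at this
    linarith
  have hterm := norm_one_div_sin_neg_mul_le hσ hu hud hd
  obtain ⟨g, hg, hsum⟩ :=
    exists_le_hasSum_exp_neg_mul_abs_add_mul (mul_pos pi_pos hσ) two_pi_pos (p - q)
  have hle : ∀ k : ℤ, ‖1 / Complex.sin (((-(π * σ) : ℝ) : ℂ) *
      (((x - y : ℝ) : ℂ) + ((p + 2 * π * k - q : ℝ) : ℂ) * I))‖ ≤ (σ * u)⁻¹ * g k := fun k => by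
    refine (hterm _).trans ?_
    rw [div_eq_inv_mul, show p + 2 * π * k - q = p - q + 2 * π * k by ring]
    gcongr
    exact hg k
  have hsum' := hsum.mul_left (σ * u)⁻¹
  have hgeom : ∑' n : ℕ, exp (-(π * σ * (2 * π) * n)) = ∑' k : ℕ, exp (-(2 * k * π ^ 2 * σ)) :=
    tsum_congr fun n => by ring_nf
  have hs := hsum'.summable.of_nonneg_of_le (fun _ => norm_nonneg _) hle
  refine ⟨hterm _, hs, (hasSum_le hle hs.hasSum hsum').trans_eq ?_⟩
  rw [hgeom]
  ring

theorem stmt_14 (σ x y p q u U : ℝ) (hσ : 0 < σ) (hxy : 0 < x - y) :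
    |Real.sin (2 * Real.pi * σ * (x - y))| *
        ‖(1 / Complex.sin (((-(Real.pi * σ) : ℝ) : ℂ) *
          (((x - y : ℝ) : ℂ) + ((p - q : ℝ) : ℂ) * Complex.I)))‖
      ≤ 2 * Real.exp (-(Real.pi * σ * |p - q|)) ∧
    (0 < u → u < U → 2 * U ≤ σ⁻¹ / 5 → x - y ∈ Set.Icc u (2 * U) →
      ‖(1 / Complex.sin (((-(Real.pi * σ) : ℝ) : ℂ) *
          (((x - y : ℝ) : ℂ) + ((p - q : ℝ) : ℂ) * Complex.I)))‖
        ≤ Real.exp (-(Real.pi * σ * |p - q|)) / (σ * u) ∧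
      Summable (fun k : ℤ => ‖(1 / Complex.sin (((-(Real.pi * σ) : ℝ) : ℂ) *
          (((x - y : ℝ) : ℂ) + ((p + 2 * Real.pi * (k : ℝ) - q : ℝ) : ℂ) * Complex.I)))‖) ∧
      ∑' k : ℤ, ‖(1 / Complex.sin (((-(Real.pi * σ) : ℝ) : ℂ) *
          (((x - y : ℝ) : ℂ) + ((p + 2 * Real.pi * (k : ℝ) - q : ℝ) : ℂ) * Complex.I)))‖
        ≤ (2 / (σ * u)) * ∑' k : ℕ, Real.exp (-(2 * (k : ℝ) * Real.pi ^ 2 * σ))) :=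
  stmt_14_general σ x y p q u U hσ
end

section
/- Fix t ∈ (0,1). Then lim_{r → 1⁻} (1−r)³ ∑_{k=1}^∞ (1 − t^k) · r^k(1 + r^k)/(1 − r^k)³ = 2ζ(3) − 2 Li₃(t), where ζ(3) = ∑_{n≥1} n^{−3} and Li₃(t) = ∑_{k≥1} t^k/k³. -/
open Filter Finset Topology

/-!
Since `1 - r ^ m = (1 - r) * (1 + r + ⋯ + r ^ (m - 1))`, the factor `(1 - r) ^ 3` cancels and the
`m`-th term becomes `(1 - t ^ m) * r ^ m (1 + r ^ m) / (1 + r + ⋯ + r ^ (m - 1)) ^ 3`, which is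
continuous at `r = 1` with value `2 (1 - t ^ m) / m ^ 3`. These terms are bounded by `54 / m ^ 3`
uniformly in `r ∈ [0, 1]`, so Tannery's theorem lets the limit pass through the sum.
-/

theorem cube_mul_pow_le_geom_sum_cube {r : ℝ} (h0 : 0 ≤ r) (h1 : r ≤ 1) (m : ℕ) :
    (m : ℝ) ^ 3 * r ^ m ≤ 27 * (∑ i ∈ range m, r ^ i) ^ 3 := by
  rcases Nat.eq_zero_or_pos m with rfl | hm
  · simp
  -- the first `m / 3 + 1` terms are each at least `r ^ (m / 3)`, whose cube is at least `r ^ m`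
  set j := m / 3
  have hsum : (j + 1 : ℝ) * r ^ j ≤ ∑ i ∈ range m, r ^ i :=
    calc (j + 1 : ℝ) * r ^ j = ∑ _i ∈ range (j + 1), r ^ j := by simp
      _ ≤ ∑ i ∈ range (j + 1), r ^ i := sum_le_sum fun i hi =>
          pow_le_pow_of_le_one h0 h1 (Nat.lt_succ_iff.1 (mem_range.1 hi))
      _ ≤ ∑ i ∈ range m, r ^ i := sum_le_sum_of_subset_of_nonneg
          (range_subset_range.2 (by omega)) fun i _ _ => pow_nonneg h0 i
  have hpow : r ^ m ≤ (r ^ j) ^ 3 := by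
    rw [← pow_mul]; exact pow_le_pow_of_le_one h0 h1 (by omega)
  have hcount : (m : ℝ) ≤ 3 * (j + 1) := by
    exact_mod_cast (show m ≤ 3 * (j + 1) by omega)
  calc (m : ℝ) ^ 3 * r ^ m ≤ (3 * (j + 1)) ^ 3 * (r ^ j) ^ 3 :=
        mul_le_mul (pow_le_pow_left₀ (by positivity) hcount 3) hpow (by positivity) (by positivity)
    _ = 27 * ((j + 1 : ℝ) * r ^ j) ^ 3 := by ring
    _ ≤ 27 * (∑ i ∈ range m, r ^ i) ^ 3 := by gcongr

theorem one_sub_pow_three_mul_div_eq_div_geom_sum {K : Type*} [Field K] {r : K} (hr : r ≠ 1)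
    (x : K) (m : ℕ) :
    (1 - r) ^ 3 * (x / (1 - r ^ m) ^ 3) = x / (∑ i ∈ range m, r ^ i) ^ 3 := by
  have : (1 - r) ^ 3 ≠ 0 := pow_ne_zero 3 (sub_ne_zero.2 hr.symm)
  rw [← mul_neg_geom_sum, mul_pow, ← div_div, mul_div_assoc', mul_div_cancel₀ _ this]

theorem tendsto_pow_mul_one_add_pow_div_geom_sum_cube {m : ℕ} (hm : m ≠ 0) :
    Tendsto (fun r : ℝ => r ^ m * (1 + r ^ m) / (∑ i ∈ range m, r ^ i) ^ 3) (𝓝 1)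
      (𝓝 (2 / (m : ℝ) ^ 3)) := by
  have hS : (∑ i ∈ range m, (1 : ℝ) ^ i) = m := by simp
  have hcont : ContinuousAt
      (fun r : ℝ => r ^ m * (1 + r ^ m) / (∑ i ∈ range m, r ^ i) ^ 3) 1 :=
    ContinuousAt.div (by fun_prop) (by fun_prop) (by rw [hS]; positivity)
  convert hcont.tendsto using 2
  rw [hS]; norm_num

theorem pow_mul_one_add_pow_div_geom_sum_cube_le {r : ℝ} (h0 : 0 ≤ r) (h1 : r ≤ 1) (m : ℕ) :
    r ^ m * (1 + r ^ m) / (∑ i ∈ range m, r ^ i) ^ 3 ≤ 54 / (m : ℝ) ^ 3 := by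
  rcases Nat.eq_zero_or_pos m with rfl | hm
  · simp
  have hS : 0 < ∑ i ∈ range m, r ^ i :=
    sum_pos' (fun i _ => pow_nonneg h0 i) ⟨0, mem_range.2 hm, by simp⟩
  have hrm : r ^ m ≤ 1 := pow_le_one₀ h0 h1
  have key := cube_mul_pow_le_geom_sum_cube h0 h1 m
  rw [div_le_div_iff₀ (by positivity) (by positivity)]
  calc r ^ m * (1 + r ^ m) * (m : ℝ) ^ 3 ≤ 2 * ((m : ℝ) ^ 3 * r ^ m) := by
        nlinarith [mul_nonneg (pow_nonneg h0 m) (pow_nonneg (Nat.cast_nonneg (α := ℝ) m) 3)]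
    _ ≤ 54 * (∑ i ∈ range m, r ^ i) ^ 3 := by linarith

theorem stmt_16 (t : ℝ) (ht : t ∈ Set.Ioo (0:ℝ) 1) :
    Tendsto (fun r : ℝ => (1 - r) ^ 3 *
        ∑' k : ℕ, (1 - t ^ (k + 1)) *
          (r ^ (k + 1) * (1 + r ^ (k + 1)) / (1 - r ^ (k + 1)) ^ 3))
      (nhdsWithin 1 (Set.Ioo (0:ℝ) 1))
      (nhds (2 * (∑' n : ℕ, 1 / ((n + 1 : ℝ)) ^ 3)
        - 2 * ∑' k : ℕ, t ^ (k + 1) / ((k + 1 : ℝ)) ^ 3)) := by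
  obtain ⟨ht0, ht1⟩ := ht
  have hzeta : Summable (fun n : ℕ => 1 / ((n + 1 : ℝ)) ^ 3) := by
    simpa using (summable_nat_add_iff 1).2 (Real.summable_one_div_nat_pow.2 (by norm_num : 1 < 3))
  have hLi : Summable (fun k : ℕ => t ^ (k + 1) / ((k + 1 : ℝ)) ^ 3) :=
    hzeta.of_nonneg_of_le (fun k => by positivity) fun k => by
      gcongr; exact pow_le_one₀ ht0.le ht1.le
  have hlimit : 2 * (∑' n : ℕ, 1 / ((n + 1 : ℝ)) ^ 3) - 2 * ∑' k : ℕ, t ^ (k + 1) / ((k + 1 : ℝ)) ^ 3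
      = ∑' k : ℕ, (1 - t ^ (k + 1)) * (2 / ((k + 1 : ℝ)) ^ 3) := by
    rw [← tsum_mul_left, ← tsum_mul_left, ← (hzeta.mul_left 2).tsum_sub (hLi.mul_left 2)]
    congr 1 with k; ring
  rw [hlimit]
  refine (tendsto_tsum_of_dominated_convergence (bound := fun k : ℕ => 54 / ((k + 1 : ℝ)) ^ 3)
    (f := fun r k => (1 - t ^ (k + 1)) *
      (r ^ (k + 1) * (1 + r ^ (k + 1)) / (∑ i ∈ range (k + 1), r ^ i) ^ 3)) ?_ ?_ ?_).congr' ?_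
  · exact (hzeta.mul_left 54).congr fun k => by ring
  · intro k
    have := tendsto_pow_mul_one_add_pow_div_geom_sum_cube k.succ_ne_zero
    push_cast at this
    exact (this.mono_left nhdsWithin_le_nhds).const_mul _
  · filter_upwards [self_mem_nhdsWithin] with r ⟨hr0, hr1⟩ k
    have htk : 0 < 1 - t ^ (k + 1) := sub_pos.2 (pow_lt_one₀ ht0.le ht1 k.succ_ne_zero)
    have hbound := pow_mul_one_add_pow_div_geom_sum_cube_le hr0.le hr1.le (k + 1)
    push_cast at hbound
    rw [Real.norm_eq_abs, abs_mul, abs_of_pos htk, abs_of_nonneg (by positivity)]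
    exact (mul_le_of_le_one_left (by positivity) (by linarith [pow_pos ht0 (k + 1)])).trans hbound
  · filter_upwards [self_mem_nhdsWithin] with r hr
    rw [← tsum_mul_left]
    congr 1 with k
    rw [mul_left_comm, one_sub_pow_three_mul_div_eq_div_geom_sum hr.2.ne]
end

section
/- For r ∈ (0,1) and integers k ≥ 1, one has 0 ≤ (1−r)/(1−r^k) − 1/k = (1−r) · (r^{k−2} + 2r^{k−3} + ⋯ + (k−1))/(k(1 + r + ⋯ + r^{k−1})) ≤ (k/2)(1−r). Consequently, for a ∈ (0,1), |∑_{k=1}^∞ (−1)^{k+1} a^k [ (1−r)/(1−r^k) − 1/k ]| ≤ (1−r) ∑_{k=1}^∞ (k/2) a^k ≤ (1−r)/(1−a)³. -/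
/-!
Writing `S = 1 + r + ⋯ + r^k`, the quantity `(1 - r) / (1 - r^(k+1))` is `1 / S`, and
`(k + 1) - S = (1 - r) · ∑_{i<k} (k - i) r^i` since `1 - r^j = (1 - r)(1 + ⋯ + r^(j-1))`.
This gives the closed form, whose numerator sum is nonnegative and at most `k(k+1)/2` while
`S ≥ 1`. The series is then dominated termwise by `(1 - r) ∑ (k+1)/2 · a^(k+1)`, which is
`(1 - r) a / (2(1 - a)²)`.
-/

open Finset

theorem natCast_add_one_sub_geom_sum {R : Type*} [CommRing R] (r : R) (n : ℕ) :
    (n + 1 : R) - ∑ i ∈ range (n + 1), r ^ i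
      = (1 - r) * ∑ i ∈ range n, ((n - i : ℕ) : R) * r ^ i := by
  induction n with
  | zero => simp
  | succ n ih =>
    have hshift : ∑ i ∈ range (n + 1), ((n + 1 - i : ℕ) : R) * r ^ i
        = ∑ i ∈ range (n + 1), ((n - i : ℕ) : R) * r ^ i
          + ∑ i ∈ range (n + 1), r ^ i := by
      rw [← sum_add_distrib]
      refine sum_congr rfl fun i hi => ?_
      rw [Nat.sub_add_comm (mem_range_succ_iff.mp hi)]
      push_cast
      ring
    rw [hshift, sum_range_succ _ n, Nat.sub_self, Nat.cast_zero, zero_mul, add_zero, mul_add,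
      ← ih, mul_neg_geom_sum, sum_range_succ _ (n + 1)]
    push_cast
    ring

theorem sum_range_natSub_mul_pow_le {r : ℝ} (hr0 : 0 ≤ r) (hr1 : r ≤ 1) (n : ℕ) :
    ∑ i ∈ range n, ((n - i : ℕ) : ℝ) * r ^ i ≤ n * (n + 1) / 2 := by
  have gauss : ∀ m : ℕ, ∑ i ∈ range m, ((m - i : ℕ) : ℝ) = m * (m + 1) / 2 := by
    intro m
    induction m with
    | zero => simp
    | succ m ih =>
      rw [sum_range_succ']
      simp only [Nat.succ_sub_succ, ih]
      push_cast
      ring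
  calc ∑ i ∈ range n, ((n - i : ℕ) : ℝ) * r ^ i
      ≤ ∑ i ∈ range n, ((n - i : ℕ) : ℝ) :=
        sum_le_sum fun i _ => mul_le_of_le_one_right (Nat.cast_nonneg _) (pow_le_one₀ hr0 hr1)
    _ = n * (n + 1) / 2 := gauss n

section

variable {r : ℝ} (hr0 : 0 ≤ r)
include hr0

theorem one_sub_div_one_sub_pow_sub_inv_eq (hr1 : r ≠ 1) (n : ℕ) :
    (1 - r) / (1 - r ^ (n + 1)) - 1 / ((n : ℝ) + 1)
      = (1 - r) * (∑ i ∈ range n, ((n - i : ℕ) : ℝ) * r ^ i)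
          / (((n : ℝ) + 1) * ∑ i ∈ range (n + 1), r ^ i) := by
  have hS : 0 < ∑ i ∈ range (n + 1), r ^ i := geom_sum_pos hr0 n.succ_ne_zero
  have hr : 1 - r ≠ 0 := sub_ne_zero.mpr hr1.symm
  rw [← mul_neg_geom_sum, ← natCast_add_one_sub_geom_sum]
  field_simp

variable (hr1 : r < 1) (n : ℕ)
include hr1

theorem one_sub_div_one_sub_pow_sub_inv_nonneg :
    0 ≤ (1 - r) / (1 - r ^ (n + 1)) - 1 / ((n : ℝ) + 1) := by
  rw [one_sub_div_one_sub_pow_sub_inv_eq hr0 hr1.ne n]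
  positivity

theorem one_sub_div_one_sub_pow_sub_inv_le :
    (1 - r) / (1 - r ^ (n + 1)) - 1 / ((n : ℝ) + 1) ≤ ((n : ℝ) + 1) / 2 * (1 - r) := by
  rw [one_sub_div_one_sub_pow_sub_inv_eq hr0 hr1.ne n]
  have hS : 1 ≤ ∑ i ∈ range (n + 1), r ^ i := by
    rw [sum_range_succ', pow_zero, le_add_iff_nonneg_left]
    positivity
  have hT := sum_range_natSub_mul_pow_le hr0 hr1.le n
  rw [div_le_iff₀ (by positivity)]
  have hc : (0 : ℝ) ≤ ((n : ℝ) + 1) ^ 2 * (1 - r) := by positivity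
  nlinarith [mul_le_mul_of_nonneg_left hS hc]

end

theorem hasSum_succ_div_two_mul_pow {𝕜 : Type*} [NormedField 𝕜] [CompleteSpace 𝕜]
    {a : 𝕜} (ha : ‖a‖ < 1) :
    HasSum (fun k : ℕ => ((k : 𝕜) + 1) / 2 * a ^ (k + 1)) (a / (1 - a) ^ 2 / 2) := by
  have hshift := (hasSum_nat_add_iff (f := fun k : ℕ => (k : 𝕜) * a ^ k) 1).mpr
    (by simpa using hasSum_coe_mul_geometric_of_norm_lt_one ha)
  convert hshift.div_const 2 using 2 with k
  push_cast
  ring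

theorem div_one_sub_sq_div_two_le {a : ℝ} (ha : a < 1) :
    a / (1 - a) ^ 2 / 2 ≤ 1 / (1 - a) ^ 3 := by
  have h : 0 < 1 - a := by linarith
  rw [div_div, div_le_div_iff₀ (by positivity) (by positivity)]
  nlinarith [mul_nonneg (sq_nonneg (1 - a)) (sq_nonneg (a - 1 / 2)), sq_nonneg (1 - a)]

theorem stmt_18 (r : ℝ) (hr : r ∈ Set.Ioo (0:ℝ) 1) :
    (∀ k : ℕ, 1 ≤ k →
      0 ≤ (1 - r) / (1 - r ^ k) - 1 / (k : ℝ) ∧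
      (1 - r) / (1 - r ^ k) - 1 / (k : ℝ)
        = (1 - r) * (∑ i ∈ Finset.range (k - 1), ((k - 1 - i : ℕ) : ℝ) * r ^ i)
            / ((k : ℝ) * ∑ i ∈ Finset.range k, r ^ i) ∧
      (1 - r) / (1 - r ^ k) - 1 / (k : ℝ) ≤ ((k : ℝ) / 2) * (1 - r)) ∧
    ∀ a : ℝ, a ∈ Set.Ioo (0:ℝ) 1 →
      |∑' k : ℕ, (-1 : ℝ) ^ k * a ^ (k + 1) *
          ((1 - r) / (1 - r ^ (k + 1)) - 1 / ((k : ℝ) + 1))|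
        ≤ (1 - r) * ∑' k : ℕ, (((k : ℝ) + 1) / 2) * a ^ (k + 1) ∧
      (1 - r) * ∑' k : ℕ, (((k : ℝ) + 1) / 2) * a ^ (k + 1) ≤ (1 - r) / (1 - a) ^ 3 := by
  obtain ⟨hr0, hr1⟩ := hr
  refine ⟨fun k hk => ?_, fun a ⟨ha0, ha1⟩ => ?_⟩
  · obtain ⟨n, rfl⟩ := Nat.exists_eq_add_of_le' hk
    simp only [Nat.add_sub_cancel, Nat.cast_add_one]
    exact ⟨one_sub_div_one_sub_pow_sub_inv_nonneg hr0.le hr1 n,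
      one_sub_div_one_sub_pow_sub_inv_eq hr0.le hr1.ne n,
      one_sub_div_one_sub_pow_sub_inv_le hr0.le hr1 n⟩
  have hsum := hasSum_succ_div_two_mul_pow (by rwa [Real.norm_of_nonneg ha0.le] : ‖a‖ < 1)
  rw [hsum.tsum_eq, ← Real.norm_eq_abs]
  refine ⟨tsum_of_norm_bounded (hsum.mul_left (1 - r)) fun k => ?_, ?_⟩
  · have hpow : 0 ≤ a ^ (k + 1) := by positivity
    rw [norm_mul, norm_mul, norm_pow, norm_neg, norm_one, one_pow, one_mul,
      Real.norm_of_nonneg hpow,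
      Real.norm_of_nonneg (one_sub_div_one_sub_pow_sub_inv_nonneg hr0.le hr1 k)]
    calc a ^ (k + 1) * ((1 - r) / (1 - r ^ (k + 1)) - 1 / ((k : ℝ) + 1))
        ≤ a ^ (k + 1) * (((k : ℝ) + 1) / 2 * (1 - r)) :=
          mul_le_mul_of_nonneg_left (one_sub_div_one_sub_pow_sub_inv_le hr0.le hr1 k) hpow
      _ = (1 - r) * (((k : ℝ) + 1) / 2 * a ^ (k + 1)) := by ring
  · calc (1 - r) * (a / (1 - a) ^ 2 / 2) ≤ (1 - r) * (1 / (1 - a) ^ 3) :=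
          mul_le_mul_of_nonneg_left (div_one_sub_sq_div_two_le ha1) (by linarith)
      _ = (1 - r) / (1 - a) ^ 3 := by ring
end

section
/- Let λ and μ be integer partitions with μ ⊆ λ such that λ/μ is a horizontal strip (i.e., λ_i ≥ μ_i ≥ λ_{i+1} for all i). Let S(λ) denote the multiset of positive parts of λ, and let m_i(λ) be the multiplicity of i as a part of λ. Define I = {i ≥ 1 : λ'_{i+1} = μ'_{i+1} and λ'_i > μ'_i} and J = {j ≥ 1 : λ'_{j+1} > μ'_{j+1} and λ'_j = μ'_j}, where λ' is the conjugate partition. Then, as multisets, S(λ) \ S(μ) = I and S(μ) \ S(λ) = J; in particular each element of these multiset differences has multiplicity exactly 1, i.e., m_i(λ) = m_i(μ) + 1 for i ∈ I and m_j(μ) = m_j(λ) + 1 for j ∈ J. -/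
/-! The column lengths `λ'_k = #{j | k ≤ λ_j}` determine everything. For a partition the set
`{j | k ≤ λ_j}` (with `k ≥ 1`) is the initial segment `[0, λ'_k)`, so the rows of length exactly
`k` form the interval `[λ'_{k+1}, λ'_k)` and `m_k(λ) = λ'_k - λ'_{k+1}`. For a horizontal strip
`μ'_k ≤ λ'_k ≤ μ'_k + 1`, so `m_i(λ) - m_i(μ) = (λ'_i - μ'_i) - (λ'_{i+1} - μ'_{i+1})` is a
difference of two `0/1` values, and the claims become linear arithmetic. -/

open Filter Set

theorem Set.Finite.eq_Iio_ncard {s : Set ℕ} (hs : s.Finite) (hlow : IsLowerSet s) :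
    s = Iio s.ncard := by
  obtain h | ⟨a, rfl⟩ := hlow.eq_univ_or_Iio
  · exact absurd (h ▸ hs) infinite_univ
  · rw [ncard_Iio_nat]

section Conjugate

variable {a : ℕ → ℕ} {k : ℕ}

lemma finite_setOf_le_of_eventually_eq_zero (ha0 : ∀ᶠ j in atTop, a j = 0) (hk : 1 ≤ k) :
    {j | k ≤ a j}.Finite := by
  rw [← Nat.cofinite_eq_atTop, eventually_cofinite] at ha0
  exact ha0.subset fun j hj => by simp only [mem_ofPred_eq] at hj ⊢; omega

lemma le_iff_lt_ncard_setOf_le (ha : Antitone a) (ha0 : ∀ᶠ j in atTop, a j = 0) (hk : 1 ≤ k)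
    (j : ℕ) : k ≤ a j ↔ j < {j | k ≤ a j}.ncard :=
  Set.ext_iff.mp ((finite_setOf_le_of_eventually_eq_zero ha0 hk).eq_Iio_ncard
    fun _ _ hle hmem => le_trans hmem (ha hle)) j

lemma ncard_setOf_succ_le_le (ha0 : ∀ᶠ j in atTop, a j = 0) (hk : 1 ≤ k) :
    {j | k + 1 ≤ a j}.ncard ≤ {j | k ≤ a j}.ncard :=
  ncard_le_ncard (fun _ hj => Nat.le_of_succ_le hj) (finite_setOf_le_of_eventually_eq_zero ha0 hk)

lemma ncard_setOf_eq (ha : Antitone a) (ha0 : ∀ᶠ j in atTop, a j = 0) (hk : 1 ≤ k) :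
    {j | a j = k}.ncard = {j | k ≤ a j}.ncard - {j | k + 1 ≤ a j}.ncard := by
  have hrows : {j | a j = k} = Ico {j | k + 1 ≤ a j}.ncard {j | k ≤ a j}.ncard := by
    ext j
    have h₁ := le_iff_lt_ncard_setOf_le ha ha0 hk j
    have h₂ := le_iff_lt_ncard_setOf_le ha ha0 (Nat.le_add_left 1 k) j
    simp only [mem_ofPred_eq, mem_Ico]
    omega
  rw [hrows, ncard_Ico_nat]

end Conjugate

section HorizontalStrip

variable {lam mu : ℕ → ℕ} {k : ℕ}

lemma ncard_setOf_le_mono (hle : ∀ i, mu i ≤ lam i) (hlam0 : ∀ᶠ j in atTop, lam j = 0)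
    (hk : 1 ≤ k) : {j | k ≤ mu j}.ncard ≤ {j | k ≤ lam j}.ncard :=
  ncard_le_ncard (fun j hj => le_trans hj (hle j))
    (finite_setOf_le_of_eventually_eq_zero hlam0 hk)

lemma ncard_setOf_le_le_succ_of_interlace (hint : ∀ i, lam (i + 1) ≤ mu i)
    (hmu0 : ∀ᶠ j in atTop, mu j = 0) (hk : 1 ≤ k) :
    {j | k ≤ lam j}.ncard ≤ {j | k ≤ mu j}.ncard + 1 := by
  have hfin := finite_setOf_le_of_eventually_eq_zero hmu0 hk
  have hsub : {j | k ≤ lam j} ⊆ insert 0 (Nat.succ '' {j | k ≤ mu j}) := by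
    rintro (_ | j) hj
    · exact mem_insert 0 _
    · exact mem_insert_of_mem 0 ⟨j, le_trans hj (hint j), rfl⟩
  calc {j | k ≤ lam j}.ncard
      ≤ (insert 0 (Nat.succ '' {j | k ≤ mu j})).ncard := ncard_le_ncard hsub ((hfin.image _).insert 0)
    _ ≤ (Nat.succ '' {j | k ≤ mu j}).ncard + 1 := ncard_insert_le _ _
    _ ≤ {j | k ≤ mu j}.ncard + 1 := Nat.add_le_add_right (ncard_image_le hfin) 1

end HorizontalStrip

open scoped Classical

theorem stmt_19 (lam mu : ℕ → ℕ)
    (hlam : Antitone lam) (hmu : Antitone mu)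
    (hlam0 : ∀ᶠ j in Filter.atTop, lam j = 0) (hmu0 : ∀ᶠ j in Filter.atTop, mu j = 0)
    (hstrip : ∀ i, mu i ≤ lam i ∧ lam (i + 1) ≤ mu i) :
    ∀ i : ℕ, 1 ≤ i →
      (Set.ncard {j | lam j = i} - Set.ncard {j | mu j = i}
        = if Set.ncard {j | i + 1 ≤ lam j} = Set.ncard {j | i + 1 ≤ mu j} ∧
             Set.ncard {j | i ≤ mu j} < Set.ncard {j | i ≤ lam j} then 1 else 0) ∧
      (Set.ncard {j | mu j = i} - Set.ncard {j | lam j = i}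
        = if Set.ncard {j | i + 1 ≤ mu j} < Set.ncard {j | i + 1 ≤ lam j} ∧
             Set.ncard {j | i ≤ lam j} = Set.ncard {j | i ≤ mu j} then 1 else 0) ∧
      ((Set.ncard {j | i + 1 ≤ lam j} = Set.ncard {j | i + 1 ≤ mu j} ∧
          Set.ncard {j | i ≤ mu j} < Set.ncard {j | i ≤ lam j}) →
        Set.ncard {j | lam j = i} = Set.ncard {j | mu j = i} + 1) ∧
      ((Set.ncard {j | i + 1 ≤ mu j} < Set.ncard {j | i + 1 ≤ lam j} ∧
          Set.ncard {j | i ≤ lam j} = Set.ncard {j | i ≤ mu j}) →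
        Set.ncard {j | mu j = i} = Set.ncard {j | lam j = i} + 1) := by
  intro i hi
  have hi' : 1 ≤ i + 1 := Nat.le_add_left 1 i
  have hle := fun j => (hstrip j).1
  have hint := fun j => (hstrip j).2
  have := ncard_setOf_le_mono hle hlam0 hi
  have := ncard_setOf_le_mono hle hlam0 hi'
  have := ncard_setOf_le_le_succ_of_interlace hint hmu0 hi
  have := ncard_setOf_le_le_succ_of_interlace hint hmu0 hi'
  have := ncard_setOf_succ_le_le hlam0 hi
  have := ncard_setOf_succ_le_le hmu0 hi
  rw [ncard_setOf_eq hlam hlam0 hi, ncard_setOf_eq hmu hmu0 hi]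
  refine ⟨?_, ?_, ?_, ?_⟩ <;> [split_ifs; split_ifs; intro; intro] <;> omega
end
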